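/- arXiv:2403.05285 — 7 statements merged into one kernel-verified Lean document; each statement's English description precedes it below -/
import Mathlib

section
/- Let V_1,…,V_r ∈ M_n(ℂ) and let λ ∈ Δ^{n−1} have strictly decreasing entries λ_1 > λ_2 > … > λ_n. Assume derv(λ) is a convex polytope, i.e. derv(λ) = conv(S) for some finite set S ⊆ ℝ^n. Call v ∈ derv(λ) optimal if every w ∈ derv(λ) with w ⊵ v satisfies w = v. Let F be a nonempty convex subset of derv(λ) such that F is a face of derv(λ) (i.e. IsExtreme holds: F ⊆ derv(λ) and whenever a point of F lies in the open segment between two points of derv(λ), both endpoints lie in F). If some point of the intrinsic (relative) interior of F is optimal, then every point of F is optimal. -/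
open Matrix MeasureTheory
open scoped ComplexOrder

/-- The dissipator `Γ_V(ρ) = ½(V*Vρ + ρV*V) − VρV*`. -/
noncomputable def dissipator {n : ℕ} (V ρ : Matrix (Fin n) (Fin n) ℂ) : Matrix (Fin n) (Fin n) ℂ :=
  (1 / 2 : ℂ) • (Vᴴ * V * ρ + ρ * (Vᴴ * V)) - V * ρ * Vᴴ

/-- `i·ad_H` as a linear map `ρ ↦ i[H,ρ]`. -/
noncomputable def iAd {n : ℕ} (H : Matrix (Fin n) (Fin n) ℂ) :
    Matrix (Fin n) (Fin n) ℂ →ₗ[ℂ] Matrix (Fin n) (Fin n) ℂ :=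
  Complex.I • (LinearMap.mulLeft ℂ H - LinearMap.mulRight ℂ H)

/-- The dissipator `Γ_V` as a linear map on matrices. -/
noncomputable def dissLin {n : ℕ} (V : Matrix (Fin n) (Fin n) ℂ) :
    Matrix (Fin n) (Fin n) ℂ →ₗ[ℂ] Matrix (Fin n) (Fin n) ℂ :=
  (1 / 2 : ℂ) • (LinearMap.mulLeft ℂ (Vᴴ * V) + LinearMap.mulRight ℂ (Vᴴ * V)) -
    (LinearMap.mulRight ℂ Vᴴ).comp (LinearMap.mulLeft ℂ V)

/-- Exponential of a linear endomorphism of the matrix space,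
computed via its matrix representation in the standard basis. -/
noncomputable def expEnd {n : ℕ}
    (A : Matrix (Fin n) (Fin n) ℂ →ₗ[ℂ] Matrix (Fin n) (Fin n) ℂ) :
    Matrix (Fin n) (Fin n) ℂ →ₗ[ℂ] Matrix (Fin n) (Fin n) ℂ :=
  Matrix.toLin (Matrix.stdBasis ℂ (Fin n) (Fin n)) (Matrix.stdBasis ℂ (Fin n) (Fin n))
    (NormedSpace.exp (LinearMap.toMatrix (Matrix.stdBasis ℂ (Fin n) (Fin n))
      (Matrix.stdBasis ℂ (Fin n) (Fin n)) A))

/-- `J(U)_{ij} = Σ_k |(U*V_kU)_{ij}|²`. -/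
noncomputable def Jmat {n r : ℕ} (V : Fin r → Matrix (Fin n) (Fin n) ℂ)
    (U : Matrix (Fin n) (Fin n) ℂ) : Matrix (Fin n) (Fin n) ℝ :=
  fun i j => ∑ k, ‖(Uᴴ * V k * U) i j‖ ^ 2

/-- The induced vector field `−L_U` applied to `λ`. -/
noncomputable def negL {n r : ℕ} (V : Fin r → Matrix (Fin n) (Fin n) ℂ)
    (U : Matrix (Fin n) (Fin n) ℂ) (lam : Fin n → ℝ) : Fin n → ℝ :=
  fun i => (∑ j, Jmat V U i j * lam j) - (∑ j, Jmat V U j i) * lam i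

/-- The set of achievable derivatives `derv(λ) = {−L_U λ : U ∈ SU(n)}`. -/
noncomputable def derv {n r : ℕ} (V : Fin r → Matrix (Fin n) (Fin n) ℂ)
    (lam : Fin n → ℝ) : Set (Fin n → ℝ) :=
  {w | ∃ U ∈ Matrix.specialUnitaryGroup (Fin n) ℂ, w = negL V U lam}

/-- `InfMaj v w` means `v ⊵ w`: all initial partial sums of `v` dominate those of `w`. -/
def InfMaj {n : ℕ} (v w : Fin n → ℝ) : Prop :=
  ∀ k : Fin n, ∑ i ∈ Finset.Iic k, w i ≤ ∑ i ∈ Finset.Iic k, v i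

/-- From a point of the intrinsic interior, the segment to any point of the set
can be extended slightly beyond the interior point while staying in the set. -/
lemma intrinsicInterior_extend {E : Type*} [NormedAddCommGroup E] [NormedSpace ℝ E]
    {F : Set E} {v₀ v : E} (hv₀ : v₀ ∈ intrinsicInterior ℝ F) (hv : v ∈ F) :
    ∃ s : ℝ, 0 < s ∧ v₀ + s • (v₀ - v) ∈ F := by
  obtain ⟨y, hy, rfl⟩ := mem_intrinsicInterior.1 hv₀
  have hvA : v ∈ affineSpan ℝ F := subset_affineSpan ℝ F hv
  have hmem : ∀ s : ℝ, s • ((y : E) - v) + (y : E) ∈ affineSpan ℝ F := fun s =>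
    (affineSpan ℝ F).smul_vsub_vadd_mem s y.2 hvA y.2
  set g : ℝ → affineSpan ℝ F := fun s => ⟨s • ((y : E) - v) + (y : E), hmem s⟩ with hg
  have hgc : Continuous g := by
    apply Continuous.subtype_mk
    exact (continuous_id.smul continuous_const).add continuous_const
  have hg0 : g 0 = y := by
    apply Subtype.ext
    simp [hg]
  have hO : IsOpen (g ⁻¹' interior (((↑) : affineSpan ℝ F → E) ⁻¹' F)) :=
    isOpen_interior.preimage hgc
  have h0 : (0 : ℝ) ∈ g ⁻¹' interior (((↑) : affineSpan ℝ F → E) ⁻¹' F) := by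
    simpa [hg0] using hy
  obtain ⟨ε, hε, hball⟩ := Metric.isOpen_iff.1 hO 0 h0
  have hs : ε / 2 ∈ g ⁻¹' interior (((↑) : affineSpan ℝ F → E) ⁻¹' F) := by
    apply hball
    rw [Metric.mem_ball, Real.dist_eq, sub_zero, abs_of_pos (half_pos hε)]
    linarith
  refine ⟨ε / 2, half_pos hε, ?_⟩
  have := interior_subset hs
  simpa [hg, sub_eq_iff_eq_add, add_comm] using this

/-- If `derv(λ)` is a convex polytope and a point of the relative
(intrinsic) interior of a face `F` is optimal for cooling (i.e. not infinitesimally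
majorized by any other achievable derivative), then every point of `F` is optimal. -/
theorem optimal_face {n r : ℕ} (V : Fin r → Matrix (Fin n) (Fin n) ℂ)
    (lam : Fin n → ℝ) (hlam : lam ∈ stdSimplex ℝ (Fin n))
    (hdec : ∀ i j : Fin n, i < j → lam j < lam i)
    (S : Finset (Fin n → ℝ)) (hS : derv V lam = convexHull ℝ (S : Set (Fin n → ℝ)))
    (F : Set (Fin n → ℝ)) (hFne : F.Nonempty) (hFconv : Convex ℝ F)
    (hface : IsExtreme ℝ (derv V lam) F)
    (hopt : ∃ v ∈ intrinsicInterior ℝ F, ∀ w ∈ derv V lam, InfMaj w v → w = v) :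
    ∀ v ∈ F, ∀ w ∈ derv V lam, InfMaj w v → w = v := by
  obtain ⟨v₀, hv₀I, hv₀opt⟩ := hopt
  intro v hv w hw hmaj
  obtain ⟨s, hs, hv'F⟩ := intrinsicInterior_extend hv₀I hv
  set v' : Fin n → ℝ := v₀ + s • (v₀ - v) with hv'def
  set a : ℝ := s / (1 + s) with ha
  have h1s : (0 : ℝ) < 1 + s := by linarith
  have ha0 : 0 < a := div_pos hs h1s
  have ha1 : a < 1 := by
    rw [ha, div_lt_one h1s]; linarith
  have hb : 1 - a = 1 / (1 + s) := by
    rw [ha]; field_simp; ring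
  -- v₀ = a • v + (1 - a) • v'
  have hv₀eq : v₀ = a • v + (1 - a) • v' := by
    rw [hv'def, ha]
    funext i
    simp only [Pi.add_apply, Pi.smul_apply, Pi.sub_apply, smul_eq_mul]
    field_simp
    ring
  have hconv : Convex ℝ (derv V lam) := by
    rw [hS]; exact convex_convexHull ℝ _
  have hv'derv : v' ∈ derv V lam := hface.1 hv'F
  set z : Fin n → ℝ := a • w + (1 - a) • v' with hz
  have hzderv : z ∈ derv V lam := hconv hw hv'derv ha0.le (by linarith) (by ring)
  have hzmaj : InfMaj z v₀ := by
    intro k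
    have h1 : ∑ i ∈ Finset.Iic k, v₀ i
        = a * ∑ i ∈ Finset.Iic k, v i + (1 - a) * ∑ i ∈ Finset.Iic k, v' i := by
      rw [Finset.mul_sum, Finset.mul_sum, ← Finset.sum_add_distrib]
      refine Finset.sum_congr rfl fun i _ => ?_
      rw [hv₀eq]; simp [smul_eq_mul]
    have h2 : ∑ i ∈ Finset.Iic k, z i
        = a * ∑ i ∈ Finset.Iic k, w i + (1 - a) * ∑ i ∈ Finset.Iic k, v' i := by
      rw [Finset.mul_sum, Finset.mul_sum, ← Finset.sum_add_distrib]
      refine Finset.sum_congr rfl fun i _ => ?_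
      simp [hz, smul_eq_mul]
    rw [h1, h2]
    have := hmaj k
    nlinarith
  have hzeq : z = v₀ := hv₀opt z hzderv hzmaj
  rw [hv₀eq] at hzeq
  have : a • w = a • v := by
    have h := hzeq
    rw [hz] at h
    funext i
    have hi := congrFun h i
    simp only [Pi.add_apply, Pi.smul_apply, smul_eq_mul] at hi ⊢
    linarith
  funext i
  have hi := congrFun this i
  simp only [Pi.smul_apply, smul_eq_mul] at hi
  exact mul_left_cancel₀ ha0.ne' hi
end

section
/- Let V ∈ M_2(ℂ) be non-normal (VV* ≠ V*V) and define the Hermitian matrix H̃ := (i/4)(tr(V*)·V − tr(V)·V*). Then there exist Ũ ∈ SU(2), a real number γ > 0 and ν ∈ [0,1) such that, with Ṽ := [[0,1],[ν,0]], one has the equality of linear maps on M_2(ℂ): Γ_V = i·ad_{H̃} + γ·Γ_{Ũ*ṼŨ}. -/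
open Matrix MeasureTheory
open scoped ComplexOrder

set_option linter.unreachableTactic false
set_option linter.unusedTactic false
set_option linter.unnecessarySeqFocus false

lemma su2_mem (p : ℝ) (q : ℂ) (h : (p:ℂ)^2 + q * (starRingEnd ℂ) q = 1) :
    !![(p:ℂ), q; -((starRingEnd ℂ) q), p] ∈ Matrix.specialUnitaryGroup (Fin 2) ℂ := by
  rw [Matrix.mem_specialUnitaryGroup_iff]
  constructor
  · rw [Matrix.mem_unitaryGroup_iff, Matrix.star_eq_conjTranspose]
    ext i j
    fin_cases i <;> fin_cases j <;>
      simp [Matrix.mul_apply, Fin.sum_univ_two, Matrix.conjTranspose_apply, Matrix.one_apply,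
        Complex.star_def] <;>
      (first | ring1 | linear_combination h)
  · rw [Matrix.det_fin_two_of]
    linear_combination h

lemma step1 (W : Matrix (Fin 2) (Fin 2) ℂ) (htr : W.trace = 0) :
    ∃ U ∈ Matrix.specialUnitaryGroup (Fin 2) ℂ, (U * W * Uᴴ) 0 0 = 0 := by
  set a := W 0 0 with ha
  have hW11 : W 1 1 = -a := by
    have := htr
    rw [Matrix.trace_fin_two] at this
    linear_combination this
  by_cases h0 : a = 0
  · refine ⟨1, one_mem _, ?_⟩
    simp [Matrix.mul_apply, Fin.sum_univ_two, Matrix.conjTranspose_apply, Matrix.one_apply, ← ha,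
      h0]
  · set b := W 0 1 with hb
    set d := W 1 0 with hd
    set B := (starRingEnd ℂ) a * b with hB
    set D := (starRingEnd ℂ) a * d with hD
    set r1 : ℝ := (D - B).re with hr1
    set r2 : ℝ := (B + D).im with hr2
    obtain ⟨α, β, hP, hm2⟩ : ∃ α β : ℝ, r2 * α + r1 * β = 0 ∧ 0 < α^2 + β^2 := by
      by_cases hz : r1 = 0 ∧ r2 = 0
      · exact ⟨1, 0, by rw [hz.1, hz.2]; ring, by norm_num⟩
      · refine ⟨r1, -r2, by ring, ?_⟩
        rcases (not_and_or.mp hz) with h | h <;>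
          nlinarith [sq_nonneg r1, sq_nonneg r2, sq_pos_of_ne_zero h]
    set q : ℂ := ⟨α, β⟩ with hqdef
    set m2 : ℝ := α^2 + β^2 with hm2def
    set k : ℝ := (B + D).re * α - (D - B).im * β with hk
    -- key: (star a) * (b * star q + d * q) = k
    have hq : (starRingEnd ℂ) a * (b * (starRingEnd ℂ) q + d * q) = (k : ℂ) := by
      simp only [hB, hD, hr1, hr2] at hP
      simp [Complex.mul_re, Complex.mul_im, Complex.add_re, Complex.add_im,
        Complex.conj_re, Complex.conj_im, Complex.sub_re, Complex.sub_im] at hP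
      apply Complex.ext <;>
        simp [hqdef, hk, hB, hD, Complex.mul_re, Complex.mul_im, Complex.add_re, Complex.add_im,
          Complex.conj_re, Complex.conj_im, Complex.sub_re, Complex.sub_im, Complex.ofReal_re,
          Complex.ofReal_im] <;>
        (first | ring1 | linear_combination hP | linear_combination -hP)
    have hqq : q * (starRingEnd ℂ) q = ((m2 : ℝ) : ℂ) := by
      have hnq : Complex.normSq q = m2 := by
        rw [hqdef, hm2def, Complex.normSq_mk]; ring
      rw [Complex.mul_conj, hnq]
    set na : ℝ := Complex.normSq a with hna
    have hna0 : 0 < na := Complex.normSq_pos.mpr h0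
    set k' : ℝ := k / na with hk'
    set s : ℝ := Real.sqrt (k'^2 + 4*m2) with hsdef
    have hs2 : s^2 = k'^2 + 4*m2 := Real.sq_sqrt (by nlinarith)
    have hs0 : 0 ≤ s := Real.sqrt_nonneg _
    set p : ℝ := (-k' + s)/2 with hpdef
    have hp0 : 0 < p := by
      have : k' < s := by nlinarith
      rw [hpdef]; linarith
    have hpp : p^2 + k'*p - m2 = 0 := by rw [hpdef]; linear_combination hs2/4
    have hN2pos : 0 < p^2 + m2 := by nlinarith [sq_nonneg p]
    set N : ℝ := Real.sqrt (p^2 + m2) with hNdef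
    have hN2 : N^2 = p^2 + m2 := Real.sq_sqrt (le_of_lt hN2pos)
    have hN0 : 0 < N := Real.sqrt_pos.mpr hN2pos
    have hN0' : (N:ℂ) ≠ 0 := by exact_mod_cast hN0.ne'
    have hN2c : ((N:ℝ):ℂ)^2 = ((p:ℝ):ℂ)^2 + ((m2:ℝ):ℂ) := by exact_mod_cast congrArg (fun x:ℝ => (x:ℂ)) hN2
    have hunit : (((p/N : ℝ)):ℂ)^2 + (q/(N:ℂ)) * (starRingEnd ℂ) (q/(N:ℂ)) = 1 := by
      rw [map_div₀]
      simp only [Complex.conj_ofReal]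
      push_cast
      field_simp
      linear_combination hqq - hN2c
    -- the real-eq key fact, complexified
    have hkreal : na*(p^2-m2)+k*p = 0 := by
      have h1 : na * (p^2 + k'*p - m2) = 0 := by rw [hpp]; ring
      have h2 : na * k' = k := by
        rw [hk', mul_div_assoc', mul_div_right_comm, div_self hna0.ne', one_mul]
      linear_combination h1 - p * h2
    have hk2 : ((na:ℝ):ℂ) * (((p:ℝ):ℂ)^2 - ((m2:ℝ):ℂ)) + ((k:ℝ):ℂ)*((p:ℝ):ℂ) = 0 := by
      have := congrArg (fun x:ℝ => (x:ℂ)) hkreal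
      push_cast at this
      linear_combination this
    have hna' : ((na:ℝ):ℂ) = (starRingEnd ℂ) a * a := Complex.normSq_eq_conj_mul_self
    have hfa : (starRingEnd ℂ) a * (a * (((p:ℝ):ℂ)^2 - ((m2:ℝ):ℂ)) + ((p:ℝ):ℂ)*(b * (starRingEnd ℂ) q + d * q)) = 0 := by
      linear_combination hk2 - (((p:ℝ):ℂ)^2 - ((m2:ℝ):ℂ)) * hna' + ((p:ℝ):ℂ) * hq
    have hf : a * (((p:ℝ):ℂ)^2 - ((m2:ℝ):ℂ)) + ((p:ℝ):ℂ)*(b * (starRingEnd ℂ) q + d * q) = 0 := by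
      rcases mul_eq_zero.mp hfa with h | h
      · exact absurd h (by simpa using h0)
      · exact h
    refine ⟨!![(((p/N : ℝ)):ℂ), q/(N:ℂ); -((starRingEnd ℂ) (q/(N:ℂ))), (((p/N : ℝ)):ℂ)],
      su2_mem _ _ hunit, ?_⟩
    simp only [Matrix.mul_apply, Fin.sum_univ_two, Matrix.conjTranspose_apply, Matrix.cons_val',
      Matrix.cons_val_zero, Matrix.cons_val_one, Matrix.head_cons, Matrix.empty_val',
      Matrix.cons_val_fin_one, Matrix.head_fin_const, Complex.star_def, map_div₀,
      Complex.conj_ofReal, map_neg, Complex.conj_conj, Matrix.of_apply]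
    rw [hW11]
    push_cast
    field_simp
    simp only [← hb, ← hd, ← ha]
    linear_combination hf - a * hqq
    

lemma sandwich (U W X : Matrix (Fin 2) (Fin 2) ℂ) (h2 : Uᴴ * U = 1)
    (h : U * W * Uᴴ = X) : W = Uᴴ * X * U := by
  rw [← h]
  calc W = (Uᴴ * U) * W * (Uᴴ * U) := by rw [h2, Matrix.one_mul, Matrix.mul_one]
    _ = Uᴴ * (U * W * Uᴴ) * U := by simp only [Matrix.mul_assoc]

lemma su2_heq (U : Matrix (Fin 2) (Fin 2) ℂ) (hU : U ∈ Matrix.specialUnitaryGroup (Fin 2) ℂ) :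
    Uᴴ * U = 1 := by
  have := (Matrix.mem_specialUnitaryGroup_iff.mp hU).1
  rw [Matrix.mem_unitaryGroup_iff', Matrix.star_eq_conjTranspose] at this
  exact this

lemma su2_heq' (U : Matrix (Fin 2) (Fin 2) ℂ) (hU : U ∈ Matrix.specialUnitaryGroup (Fin 2) ℂ) :
    U * Uᴴ = 1 := by
  have := (Matrix.mem_specialUnitaryGroup_iff.mp hU).1
  rw [Matrix.mem_unitaryGroup_iff, Matrix.star_eq_conjTranspose] at this
  exact this

lemma su2_diag_mem (w : ℂ) (hw : w * (starRingEnd ℂ) w = 1) :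
    !![w, 0; 0, (starRingEnd ℂ) w] ∈ Matrix.specialUnitaryGroup (Fin 2) ℂ := by
  rw [Matrix.mem_specialUnitaryGroup_iff]
  constructor
  · rw [Matrix.mem_unitaryGroup_iff, Matrix.star_eq_conjTranspose]
    ext i j
    fin_cases i <;> fin_cases j <;>
      simp [Matrix.mul_apply, Fin.sum_univ_two, Matrix.conjTranspose_apply, Matrix.one_apply,
        Complex.star_def] <;>
      (first | ring1 | linear_combination hw)
  · rw [Matrix.det_fin_two_of]
    linear_combination hw

lemma exists_su2 (W : Matrix (Fin 2) (Fin 2) ℂ) (htr : W.trace = 0)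
    (hn : W * Wᴴ ≠ Wᴴ * W) :
    ∃ U ∈ Matrix.specialUnitaryGroup (Fin 2) ℂ, ∃ z : ℂ, ∃ ν : ℝ,
      z ≠ 0 ∧ 0 ≤ ν ∧ ν < 1 ∧ W = z • (Uᴴ * !![0, 1; (ν:ℂ), 0] * U) := by
  obtain ⟨U₁, hU₁, h00⟩ := step1 W htr
  have h1 : U₁ * U₁ᴴ = 1 := su2_heq' _ hU₁
  have h2 : U₁ᴴ * U₁ = 1 := su2_heq _ hU₁
  set M := U₁ * W * U₁ᴴ with hM
  have htrM : M.trace = 0 := by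
    rw [hM, Matrix.trace_mul_cycle, h2, Matrix.one_mul, htr]
  have hM11 : M 1 1 = 0 := by
    rw [Matrix.trace_fin_two] at htrM
    linear_combination htrM - h00
  have hMeq : M = !![0, M 0 1; M 1 0, 0] := by
    ext i j
    fin_cases i <;> fin_cases j <;> simp [hM11] <;> exact h00
  -- non-normality of M
  have hMn : M * Mᴴ ≠ Mᴴ * M := by
    intro h
    apply hn
    have e1 : Mᴴ = U₁ * Wᴴ * U₁ᴴ := by
      rw [hM]
      simp only [Matrix.conjTranspose_mul, Matrix.conjTranspose_conjTranspose, Matrix.mul_assoc]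
    have e2 : M * Mᴴ = U₁ * (W * Wᴴ) * U₁ᴴ := by
      rw [hM, e1]
      calc U₁ * W * U₁ᴴ * (U₁ * Wᴴ * U₁ᴴ)
          = U₁ * W * (U₁ᴴ * U₁) * Wᴴ * U₁ᴴ := by simp only [Matrix.mul_assoc]
        _ = U₁ * (W * Wᴴ) * U₁ᴴ := by rw [h2, Matrix.mul_one]; simp only [Matrix.mul_assoc]
    have e3 : Mᴴ * M = U₁ * (Wᴴ * W) * U₁ᴴ := by
      rw [hM, e1]
      calc U₁ * Wᴴ * U₁ᴴ * (U₁ * W * U₁ᴴ)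
          = U₁ * Wᴴ * (U₁ᴴ * U₁) * W * U₁ᴴ := by simp only [Matrix.mul_assoc]
        _ = U₁ * (Wᴴ * W) * U₁ᴴ := by rw [h2, Matrix.mul_one]; simp only [Matrix.mul_assoc]
    rw [e2, e3] at h
    calc W * Wᴴ = (U₁ᴴ * U₁) * (W * Wᴴ) * (U₁ᴴ * U₁) := by
          rw [h2, Matrix.one_mul, Matrix.mul_one]
      _ = U₁ᴴ * (U₁ * (W * Wᴴ) * U₁ᴴ) * U₁ := by simp only [Matrix.mul_assoc]
      _ = U₁ᴴ * (U₁ * (Wᴴ * W) * U₁ᴴ) * U₁ := by rw [h]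
      _ = (U₁ᴴ * U₁) * (Wᴴ * W) * (U₁ᴴ * U₁) := by simp only [Matrix.mul_assoc]
      _ = Wᴴ * W := by rw [h2, Matrix.one_mul, Matrix.mul_one]
  have hne : Complex.normSq (M 0 1) ≠ Complex.normSq (M 1 0) := by
    intro h
    apply hMn
    have hcc : M 0 1 * (starRingEnd ℂ) (M 0 1) = M 1 0 * (starRingEnd ℂ) (M 1 0) := by
      rw [Complex.mul_conj, Complex.mul_conj, h]
    rw [hMeq]
    ext i j
    fin_cases i <;> fin_cases j <;>
      simp [Matrix.mul_apply, Fin.sum_univ_two, Matrix.conjTranspose_apply, Complex.star_def] <;>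
      (first | ring1 | linear_combination hcc | linear_combination -hcc)
  -- orientation
  obtain ⟨U₂, hU₂, z, e, hze, hM2⟩ :
      ∃ U₂ ∈ Matrix.specialUnitaryGroup (Fin 2) ℂ, ∃ z e : ℂ,
        Complex.normSq e < Complex.normSq z ∧ U₂ * W * U₂ᴴ = !![0, z; e, 0] := by
    rcases hne.lt_or_gt with hlt | hlt
    case inr => exact ⟨U₁, hU₁, M 0 1, M 1 0, hlt, by rw [← hM]; exact hMeq⟩
    case inl =>
      have hS : !![(0:ℂ), 1; -1, 0] ∈ Matrix.specialUnitaryGroup (Fin 2) ℂ := by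
        have h := su2_mem 0 1 (by norm_num)
        have e : !![((0:ℝ):ℂ), 1; -((starRingEnd ℂ) 1), ((0:ℝ):ℂ)] = !![(0:ℂ), 1; -1, 0] := by
          norm_num
        rwa [e] at h
      refine ⟨!![(0:ℂ), 1; -1, 0] * U₁, mul_mem hS hU₁, -(M 1 0), -(M 0 1), by
        simpa [Complex.normSq_neg] using hlt, ?_⟩
      have heq : !![(0:ℂ), 1; -1, 0] * U₁ * W * (!![(0:ℂ), 1; -1, 0] * U₁)ᴴ
          = !![(0:ℂ), 1; -1, 0] * M * !![(0:ℂ), 1; -1, 0]ᴴ := by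
        rw [hM, Matrix.conjTranspose_mul]
        simp only [Matrix.mul_assoc]
      rw [heq, hMeq]
      ext i j
      fin_cases i <;> fin_cases j <;>
        simp [Matrix.mul_apply, Fin.sum_univ_two, Matrix.conjTranspose_apply]
  have hz0 : z ≠ 0 := by
    intro h
    rw [h] at hze
    simp at hze
    nlinarith [Complex.normSq_nonneg e, hze]
  have h2' : U₂ᴴ * U₂ = 1 := su2_heq _ hU₂
  by_cases he : e = 0
  · refine ⟨U₂, hU₂, z, 0, hz0, le_refl _, one_pos, ?_⟩
    have hW : W = U₂ᴴ * !![0, z; e, 0] * U₂ := sandwich _ _ _ h2' hM2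
    have hzz : !![(0:ℂ), z; 0, 0] = z • !![0, 1; ((0:ℝ):ℂ), 0] := by
      ext i j
      fin_cases i <;> fin_cases j <;> simp
    rw [hW, he, hzz, Matrix.mul_smul, Matrix.smul_mul]
  · set θ : ℝ := (e / z).arg with hθ
    set w : ℂ := Complex.exp ((θ/4 : ℝ) * Complex.I) with hw
    have hsw : (starRingEnd ℂ) w = Complex.exp (-((θ/4 : ℝ) : ℂ) * Complex.I) := by
      rw [hw, ← Complex.exp_conj]
      congr 1
      rw [_root_.map_mul, Complex.conj_ofReal, Complex.conj_I]
      ring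
    have hww : w * (starRingEnd ℂ) w = 1 := by
      rw [hw, hsw, ← Complex.exp_add]
      norm_num
    set ν : ℝ := ‖e‖ / ‖z‖ with hν
    have hν0 : 0 ≤ ν := div_nonneg (norm_nonneg _) (norm_nonneg _)
    have habs : ‖e‖ < ‖z‖ := by
      have h1' : (‖e‖)^2 < (‖z‖)^2 := by
        rw [← Complex.sq_norm, ← Complex.sq_norm] at hze
        exact hze
      exact lt_of_pow_lt_pow_left₀ 2 (norm_nonneg _) h1'
    have hν1 : ν < 1 := by
      rw [hν]
      exact (div_lt_one (norm_pos_iff.mpr hz0)).mpr habs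
    have hzw : z * w^2 ≠ 0 := mul_ne_zero hz0 (pow_ne_zero _ (Complex.exp_ne_zero _))
    -- key identity
    have harg : (↑(‖e/z‖) * Complex.exp ((e/z).arg * Complex.I)) = e/z :=
      Complex.norm_mul_exp_arg_mul_I _
    have habsz : ((‖z‖ : ℝ) : ℂ) ≠ 0 := by
      exact_mod_cast (norm_pos_iff.mpr hz0).ne'
    have hνc' : (ν : ℂ) = ((‖e‖ : ℝ) : ℂ) / ((‖z‖ : ℝ) : ℂ) := by
      rw [hν]
      push_cast
      ring
    have hz' : e = (ν:ℂ) * z * Complex.exp ((θ:ℝ) * Complex.I) := by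
      rw [hνc']
      rw [← hθ, norm_div, Complex.ofReal_div] at harg
      rw [mul_right_comm, harg, div_mul_cancel₀ _ hz0]
    have hw2 : w^2 = Complex.exp (((θ/2 : ℝ) : ℂ) * Complex.I) := by
      rw [hw, sq, ← Complex.exp_add]
      congr 1
      push_cast
      ring
    have hsw2 : ((starRingEnd ℂ) w)^2 = Complex.exp (-((θ/2 : ℝ) : ℂ) * Complex.I) := by
      rw [hsw, sq, ← Complex.exp_add]
      congr 1
      push_cast
      ring
    have hexp : Complex.exp ((θ:ℝ) * Complex.I) * Complex.exp (-((θ/2 : ℝ) : ℂ) * Complex.I)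
        = Complex.exp (((θ/2 : ℝ) : ℂ) * Complex.I) := by
      rw [← Complex.exp_add]
      congr 1
      push_cast
      ring
    have KI : e * ((starRingEnd ℂ) w)^2 = z * w^2 * (ν:ℂ) := by
      rw [hz', hsw2, hw2]
      linear_combination (ν:ℂ) * z * hexp
    have hR : !![w, 0; 0, (starRingEnd ℂ) w] ∈ Matrix.specialUnitaryGroup (Fin 2) ℂ :=
      su2_diag_mem w hww
    refine ⟨!![w, 0; 0, (starRingEnd ℂ) w] * U₂, mul_mem hR hU₂, z * w^2, ν, hzw, hν0, hν1, ?_⟩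
    have h2'' : (!![w, 0; 0, (starRingEnd ℂ) w] * U₂)ᴴ * (!![w, 0; 0, (starRingEnd ℂ) w] * U₂) = 1 :=
      su2_heq _ (mul_mem hR hU₂)
    have hM3 : (!![w, 0; 0, (starRingEnd ℂ) w] * U₂) * W * (!![w, 0; 0, (starRingEnd ℂ) w] * U₂)ᴴ
        = (z * w^2) • !![0, 1; (ν:ℂ), 0] := by
      have : (!![w, 0; 0, (starRingEnd ℂ) w] * U₂) * W * (!![w, 0; 0, (starRingEnd ℂ) w] * U₂)ᴴ
          = !![w, 0; 0, (starRingEnd ℂ) w] * (U₂ * W * U₂ᴴ) * !![w, 0; 0, (starRingEnd ℂ) w]ᴴ := by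
        rw [Matrix.conjTranspose_mul]
        simp only [Matrix.mul_assoc]
      rw [this, hM2]
      ext i j
      fin_cases i <;> fin_cases j <;>
        simp [Matrix.mul_apply, Fin.sum_univ_two, Matrix.conjTranspose_apply, Complex.star_def] <;>
        (first | ring1 | linear_combination KI)
    have hW : W = (!![w, 0; 0, (starRingEnd ℂ) w] * U₂)ᴴ * ((z * w^2) • !![0, 1; (ν:ℂ), 0])
        * (!![w, 0; 0, (starRingEnd ℂ) w] * U₂) := sandwich _ _ _ h2'' hM3
    rw [hW, Matrix.mul_smul, Matrix.smul_mul]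

set_option maxHeartbeats 1000000 in
lemma diss_shift (V ρ : Matrix (Fin 2) (Fin 2) ℂ) :
    dissipator V ρ =
      iAd ((Complex.I / 4) • ((Vᴴ).trace • V - V.trace • Vᴴ)) ρ
        + dissipator (V - (V.trace / 2) • 1) ρ := by
  ext i j
  fin_cases i <;> fin_cases j <;>
  · simp only [dissipator, iAd, Matrix.mul_apply, Fin.sum_univ_two, Matrix.conjTranspose_apply,
      Matrix.trace_fin_two, Matrix.one_apply, LinearMap.smul_apply, LinearMap.sub_apply,
      LinearMap.mulLeft_apply, LinearMap.mulRight_apply, Matrix.smul_apply, Matrix.sub_apply,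
      Matrix.add_apply, star_add, star_sub, star_mul', star_smul, Complex.star_def, _root_.map_add,
      _root_.map_sub, _root_.map_mul, map_div₀, map_ofNat, Complex.conj_conj, Complex.conj_I,
      Fin.isValue, smul_eq_mul, Matrix.cons_val', Matrix.cons_val_zero, Matrix.cons_val_one,
      Matrix.head_cons, Matrix.head_fin_const, Matrix.empty_val', Matrix.cons_val_fin_one]
    norm_num [Matrix.one_apply]
    ring_nf
    simp only [Complex.I_sq]
    ring

lemma diss_smul (z : ℂ) (M ρ : Matrix (Fin 2) (Fin 2) ℂ) :
    dissipator (z • M) ρ = ((starRingEnd ℂ) z * z) • dissipator M ρ := by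
  ext i j
  fin_cases i <;> fin_cases j <;>
  · simp only [dissipator, Matrix.mul_apply, Fin.sum_univ_two, Matrix.conjTranspose_apply,
      Matrix.smul_apply, Matrix.sub_apply, Matrix.add_apply, smul_eq_mul, star_mul',
      Complex.star_def, Complex.conj_conj]
    ring

/-- Parameter reduction for a non-normal qubit Lindblad term:
`Γ_V = i·ad_{H̃} + γ·Γ_{Ũ*ṼŨ}` with `H̃ = (i/4)(tr(V*)V − tr(V)V*)`,
`Ṽ = [[0,1],[ν,0]]`, `Ũ ∈ SU(2)`, `γ > 0` and `ν ∈ [0,1)`. -/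
theorem qubit_parameter_reduction (V : Matrix (Fin 2) (Fin 2) ℂ)
    (hV : V * Vᴴ ≠ Vᴴ * V) :
    ∃ Ut ∈ Matrix.specialUnitaryGroup (Fin 2) ℂ, ∃ γ ν : ℝ,
      0 < γ ∧ ν ∈ Set.Ico (0 : ℝ) 1 ∧
      ∀ ρ : Matrix (Fin 2) (Fin 2) ℂ,
        dissipator V ρ =
          iAd ((Complex.I / 4) • ((Vᴴ).trace • V - V.trace • Vᴴ)) ρ
            + (γ : ℂ) • dissipator ((Ut : Matrix (Fin 2) (Fin 2) ℂ)ᴴ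
                * !![0, 1; (ν : ℂ), 0] * Ut) ρ := by
  have htrW : (V - (V.trace/2) • (1 : Matrix (Fin 2) (Fin 2) ℂ)).trace = 0 := by
    rw [Matrix.trace_sub, Matrix.trace_smul, Matrix.trace_one]
    simp
  have hdiff : (V - (V.trace/2) • (1 : Matrix (Fin 2) (Fin 2) ℂ))
        * (V - (V.trace/2) • (1 : Matrix (Fin 2) (Fin 2) ℂ))ᴴ
      - (V - (V.trace/2) • (1 : Matrix (Fin 2) (Fin 2) ℂ))ᴴ
        * (V - (V.trace/2) • (1 : Matrix (Fin 2) (Fin 2) ℂ))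
      = V * Vᴴ - Vᴴ * V := by
    ext i j
    fin_cases i <;> fin_cases j <;>
    · simp only [Matrix.mul_apply, Fin.sum_univ_two, Matrix.conjTranspose_apply,
        Matrix.trace_fin_two, Matrix.smul_apply, Matrix.sub_apply, Matrix.add_apply,
        star_add, star_sub, star_mul', star_smul, Complex.star_def, _root_.map_add,
        _root_.map_sub, _root_.map_mul, map_div₀, map_ofNat, Complex.conj_conj,
        Fin.isValue, smul_eq_mul, Matrix.cons_val', Matrix.cons_val_zero, Matrix.cons_val_one,
        Matrix.head_cons, Matrix.head_fin_const, Matrix.empty_val', Matrix.cons_val_fin_one]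
      norm_num [Matrix.one_apply]
      ring
  have hnW : (V - (V.trace/2) • (1 : Matrix (Fin 2) (Fin 2) ℂ))
        * (V - (V.trace/2) • (1 : Matrix (Fin 2) (Fin 2) ℂ))ᴴ
      ≠ (V - (V.trace/2) • (1 : Matrix (Fin 2) (Fin 2) ℂ))ᴴ
        * (V - (V.trace/2) • (1 : Matrix (Fin 2) (Fin 2) ℂ)) := by
    intro h
    apply hV
    rw [h, sub_self] at hdiff
    exact sub_eq_zero.mp hdiff.symm
  obtain ⟨U, hU, z, ν, hz0, hν0, hν1, hWeq⟩ :=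
    exists_su2 (V - (V.trace/2) • (1 : Matrix (Fin 2) (Fin 2) ℂ)) htrW hnW
  refine ⟨U, hU, Complex.normSq z, ν, Complex.normSq_pos.mpr hz0, ⟨hν0, hν1⟩, ?_⟩
  intro ρ
  rw [diss_shift V ρ]
  congr 1
  rw [hWeq, diss_smul, Complex.normSq_eq_conj_mul_self]
end

section
/- Fix ν ∈ [0,1). Then the space of generators satisfies Q = { (a, 1 + ν² − ((1 + ν² − 2sν)/2)·(1 − a²/(1−ν²)²)) : a ∈ [−(1−ν²), 1−ν²], s ∈ [−1,1] }. Moreover, for x, z ∈ ℝ, the unitary U = exp(iπz·σ_z)·exp(iπx·σ_x) ∈ SU(2) realizes the point (a, 1 + ν² − ((1 + ν² − 2cos(4πz)·ν)/2)·(1 − a²/(1−ν²)²)) whenever 1 − a/(1−ν²) = 2 sin(πx)², where σ_x = [[0,1],[1,0]] and σ_z = [[1,0],[0,−1]]. -/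
open Matrix MeasureTheory
open scoped ComplexOrder

/-- The Lindblad term `Ṽ = [[0,1],[ν,0]]`. -/
noncomputable def Vnu (ν : ℝ) : Matrix (Fin 2) (Fin 2) ℂ := !![0, 1; (ν : ℂ), 0]

/-- The space of generators `Q = {(J(U)₁₂ − J(U)₂₁, J(U)₁₂ + J(U)₂₁) : U ∈ SU(2)}`. -/
noncomputable def Qset (ν : ℝ) : Set (ℝ × ℝ) :=
  {p | ∃ U ∈ Matrix.specialUnitaryGroup (Fin 2) ℂ,
    p = (Jmat (fun _ : Fin 1 => Vnu ν) U 0 1 - Jmat (fun _ : Fin 1 => Vnu ν) U 1 0,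
         Jmat (fun _ : Fin 1 => Vnu ν) U 0 1 + Jmat (fun _ : Fin 1 => Vnu ν) U 1 0)}


/-! ### Auxiliary material -/

section Aux

open Complex

/-- Exponential of a multiple of `σ_z`. -/
lemma expz_aux (θ : ℂ) : NormedSpace.exp (θ • !![(1:ℂ),0;0,-1])
    = !![Complex.exp θ, 0; 0, Complex.exp (-θ)] := by
  have h : θ • !![(1:ℂ),0;0,-1] = Matrix.diagonal ![θ, -θ] := by
    ext i j
    fin_cases i <;> fin_cases j <;> simp [Matrix.diagonal]
  rw [h, Matrix.exp_diagonal]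
  ext i j
  fin_cases i <;> fin_cases j <;>
    simp [Matrix.diagonal, Pi.exp_def, Complex.exp_eq_exp_ℂ]

lemma Pinv_aux : (!![(1:ℂ),1;1,-1])⁻¹ = (1/2 : ℂ) • !![(1:ℂ),1;1,-1] := by
  rw [Matrix.inv_def]
  simp [Matrix.adjugate_fin_two, Matrix.det_fin_two_of]
  norm_num

/-- Exponential of a multiple of `σ_x`. -/
lemma expx_aux (θ : ℂ) : NormedSpace.exp (θ • !![(0:ℂ),1;1,0])
    = !![(Complex.exp θ + Complex.exp (-θ))/2, (Complex.exp θ - Complex.exp (-θ))/2;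
        (Complex.exp θ - Complex.exp (-θ))/2, (Complex.exp θ + Complex.exp (-θ))/2] := by
  have hU : IsUnit (!![(1:ℂ),1;1,-1]) := by
    rw [Matrix.isUnit_iff_isUnit_det, Matrix.det_fin_two_of]
    norm_num
  have h : θ • !![(0:ℂ),1;1,0]
      = !![(1:ℂ),1;1,-1] * (θ • !![(1:ℂ),0;0,-1]) * (!![(1:ℂ),1;1,-1])⁻¹ := by
    rw [Pinv_aux]
    ext i j
    fin_cases i <;> fin_cases j <;> simp [Matrix.mul_apply, Fin.sum_univ_two] <;> ring
  rw [h, Matrix.exp_conj _ _ hU, expz_aux, Pinv_aux]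
  ext i j
  fin_cases i <;> fin_cases j <;> simp [Matrix.mul_apply, Fin.sum_univ_two] <;> ring

/-- The generic `SU(2)` matrix built from `α, β`. -/
noncomputable def Umat (α β : ℂ) : Matrix (Fin 2) (Fin 2) ℂ :=
  !![α, β; -(starRingEnd ℂ) β, (starRingEnd ℂ) α]

lemma Umat_mem {α β : ℂ} (h : Complex.normSq α + Complex.normSq β = 1) :
    Umat α β ∈ Matrix.specialUnitaryGroup (Fin 2) ℂ := by
  have hc : (Complex.normSq α : ℂ) + (Complex.normSq β : ℂ) = 1 := by
    exact_mod_cast h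
  rw [Matrix.mem_specialUnitaryGroup_iff]
  constructor
  · rw [Matrix.mem_unitaryGroup_iff']
    ext i j
    fin_cases i <;> fin_cases j <;>
      simp [Umat, Matrix.mul_apply, Fin.sum_univ_two, Matrix.star_apply] <;>
      first
        | linear_combination Complex.mul_conj α + Complex.mul_conj β + hc
        | linear_combination Complex.mul_conj α + Complex.mul_conj β - hc
        | linear_combination Complex.mul_conj α + Complex.mul_conj β
        | linear_combination hc
        | linear_combination -hc
        | ring
  · rw [Matrix.det_fin_two]
    simp [Umat]
    linear_combination Complex.mul_conj α + Complex.mul_conj β + hc - 1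

lemma J01_aux (ν : ℝ) (α β : ℂ) :
    Jmat (fun _ : Fin 1 => Vnu ν) (Umat α β) 0 1
      = Complex.normSq ((starRingEnd ℂ) α ^ 2 - (ν : ℂ) * β ^ 2) := by
  rw [Jmat, Fin.sum_univ_one, ← Complex.sq_norm]
  congr 1
  simp [Vnu, Umat, Matrix.mul_apply, Fin.sum_univ_two, Matrix.conjTranspose_apply]
  ring

lemma J10_aux (ν : ℝ) (α β : ℂ) :
    Jmat (fun _ : Fin 1 => Vnu ν) (Umat α β) 1 0
      = Complex.normSq ((ν : ℂ) * α ^ 2 - (starRingEnd ℂ) β ^ 2) := by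
  rw [Jmat, Fin.sum_univ_one, ← Complex.sq_norm]
  congr 1
  simp [Vnu, Umat, Matrix.mul_apply, Fin.sum_univ_two, Matrix.conjTranspose_apply]
  ring

lemma key1_aux (ν : ℝ) (α β : ℂ) :
    Complex.normSq ((starRingEnd ℂ) α ^ 2 - (ν : ℂ) * β ^ 2)
      - Complex.normSq ((ν : ℂ) * α ^ 2 - (starRingEnd ℂ) β ^ 2)
    = (1 - ν ^ 2) * (Complex.normSq α ^ 2 - Complex.normSq β ^ 2) := by
  simp only [pow_two, Complex.normSq_apply, Complex.sub_re, Complex.sub_im,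
    Complex.mul_re, Complex.mul_im, Complex.conj_re, Complex.conj_im,
    Complex.ofReal_re, Complex.ofReal_im]
  ring

lemma key2_aux (ν : ℝ) (α β : ℂ) :
    Complex.normSq ((starRingEnd ℂ) α ^ 2 - (ν : ℂ) * β ^ 2)
      + Complex.normSq ((ν : ℂ) * α ^ 2 - (starRingEnd ℂ) β ^ 2)
    = (1 + ν ^ 2) * (Complex.normSq α ^ 2 + Complex.normSq β ^ 2)
      - 4 * ν * (α ^ 2 * β ^ 2).re := by
  simp only [pow_two, Complex.normSq_apply, Complex.sub_re, Complex.sub_im,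
    Complex.mul_re, Complex.mul_im, Complex.conj_re, Complex.conj_im,
    Complex.ofReal_re, Complex.ofReal_im]
  ring

lemma su2_form {U : Matrix (Fin 2) (Fin 2) ℂ}
    (hU : U ∈ Matrix.specialUnitaryGroup (Fin 2) ℂ) :
    U = Umat (U 0 0) (U 0 1) ∧ Complex.normSq (U 0 0) + Complex.normSq (U 0 1) = 1 := by
  obtain ⟨h1, h2⟩ := Matrix.mem_specialUnitaryGroup_iff.mp hU
  have hdet : U.det = 1 := h2
  have hinv : U⁻¹ = star U := Matrix.inv_eq_left_inv h1.1
  have hadj : star U = U.adjugate := by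
    rw [← hinv, Matrix.inv_def, hdet]; simp
  have h00 : (starRingEnd ℂ) (U 0 0) = U 1 1 := by
    have := congrFun (congrFun hadj 0) 0
    simpa [Matrix.star_apply, Matrix.adjugate_fin_two] using this
  have h01 : (starRingEnd ℂ) (U 0 1) = -U 1 0 := by
    have := congrFun (congrFun hadj 1) 0
    simpa [Matrix.star_apply, Matrix.adjugate_fin_two] using this
  constructor
  · ext i j
    fin_cases i <;> fin_cases j <;>
      simp [Umat]
    · rw [h01]; ring
    · rw [h00]
  · have hd : U 0 0 * U 1 1 - U 0 1 * U 1 0 = 1 := by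
      rw [← Matrix.det_fin_two]; exact hdet
    have h10 : U 1 0 = -(starRingEnd ℂ) (U 0 1) := by rw [h01]; ring
    rw [← h00, h10] at hd
    have hcx : (Complex.normSq (U 0 0) : ℂ) + (Complex.normSq (U 0 1)) = 1 := by
      rw [← Complex.mul_conj, ← Complex.mul_conj]
      linear_combination hd
    exact_mod_cast hcx

lemma exp_I_add_aux (t : ℝ) :
    Complex.exp (Complex.I * t) + Complex.exp (-(Complex.I * t))
      = 2 * (Real.cos t : ℂ) := by
  have h1 : Complex.I * (t : ℂ) = (t : ℂ) * Complex.I := mul_comm _ _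
  have h2 : -(Complex.I * (t : ℂ)) = ((-t : ℝ) : ℂ) * Complex.I := by push_cast; ring
  rw [h2, h1, Complex.exp_mul_I, Complex.exp_mul_I,
    ← Complex.ofReal_cos, ← Complex.ofReal_sin, ← Complex.ofReal_cos, ← Complex.ofReal_sin,
    Real.cos_neg, Real.sin_neg]
  push_cast
  ring

lemma exp_I_sub_aux (t : ℝ) :
    Complex.exp (Complex.I * t) - Complex.exp (-(Complex.I * t))
      = 2 * Complex.I * (Real.sin t : ℂ) := by
  have h1 : Complex.I * (t : ℂ) = (t : ℂ) * Complex.I := mul_comm _ _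
  have h2 : -(Complex.I * (t : ℂ)) = ((-t : ℝ) : ℂ) * Complex.I := by push_cast; ring
  rw [h2, h1, Complex.exp_mul_I, Complex.exp_mul_I,
    ← Complex.ofReal_cos, ← Complex.ofReal_sin, ← Complex.ofReal_cos, ← Complex.ofReal_sin,
    Real.cos_neg, Real.sin_neg]
  push_cast
  ring

/-- The explicit product `exp(iπz σ_z)·exp(iπx σ_x)` in `Umat` form. -/
lemma exp_prod_aux (x z : ℝ) :
    NormedSpace.exp ((Complex.I * (Real.pi * z)) • !![(1:ℂ), 0; 0, -1])
        * NormedSpace.exp ((Complex.I * (Real.pi * x)) • !![(0:ℂ), 1; 1, 0])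
      = Umat (Complex.exp (Complex.I * (Real.pi * z)) * (Real.cos (Real.pi * x) : ℂ))
          (Complex.I * Complex.exp (Complex.I * (Real.pi * z)) * (Real.sin (Real.pi * x) : ℂ)) := by
  rw [expz_aux, expx_aux]
  have hz' : ((Real.pi : ℂ) * z) = ((Real.pi * z : ℝ) : ℂ) := by push_cast; ring
  have hx' : ((Real.pi : ℂ) * x) = ((Real.pi * x : ℝ) : ℂ) := by push_cast; ring
  rw [hz', hx']
  have hadd : (Complex.exp (Complex.I * ((Real.pi * x : ℝ) : ℂ))
      + Complex.exp (-(Complex.I * ((Real.pi * x : ℝ) : ℂ)))) / 2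
      = (Real.cos (Real.pi * x) : ℂ) := by
    rw [exp_I_add_aux]; ring
  have hsub : (Complex.exp (Complex.I * ((Real.pi * x : ℝ) : ℂ))
      - Complex.exp (-(Complex.I * ((Real.pi * x : ℝ) : ℂ)))) / 2
      = Complex.I * (Real.sin (Real.pi * x) : ℂ) := by
    rw [exp_I_sub_aux]; ring
  have hconj : (starRingEnd ℂ) (Complex.exp (Complex.I * ((Real.pi * z : ℝ) : ℂ)))
      = Complex.exp (-(Complex.I * ((Real.pi * z : ℝ) : ℂ))) := by
    rw [← Complex.exp_conj]
    congr 1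
    rw [_root_.map_mul, Complex.conj_I, Complex.conj_ofReal]
    ring
  rw [hadd, hsub]
  unfold Umat
  have hA : (starRingEnd ℂ) (Complex.exp (Complex.I * ((Real.pi * z : ℝ) : ℂ))
        * (Real.cos (Real.pi * x) : ℂ))
      = Complex.exp (-(Complex.I * ((Real.pi * z : ℝ) : ℂ))) * (Real.cos (Real.pi * x) : ℂ) := by
    rw [_root_.map_mul, hconj, Complex.conj_ofReal]
  have hB : (starRingEnd ℂ) (Complex.I * Complex.exp (Complex.I * ((Real.pi * z : ℝ) : ℂ))
        * (Real.sin (Real.pi * x) : ℂ))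
      = -(Complex.I * Complex.exp (-(Complex.I * ((Real.pi * z : ℝ) : ℂ)))
          * (Real.sin (Real.pi * x) : ℂ)) := by
    rw [_root_.map_mul, _root_.map_mul, Complex.conj_I, hconj, Complex.conj_ofReal]
    ring
  rw [hA, hB]
  ext i j
  fin_cases i <;> fin_cases j <;>
    simp [Matrix.mul_apply, Fin.sum_univ_two] <;>
    ring

end Aux

lemma part2_aux (ν : ℝ) (hν : ν ∈ Set.Ico (0 : ℝ) 1) (x z a : ℝ)
    (hxa : 1 - a / (1 - ν ^ 2) = 2 * Real.sin (Real.pi * x) ^ 2) :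
    (NormedSpace.exp ((Complex.I * (Real.pi * z)) • !![1, 0; 0, -1])
        * NormedSpace.exp ((Complex.I * (Real.pi * x)) • !![0, 1; 1, 0])
      ∈ Matrix.specialUnitaryGroup (Fin 2) ℂ)
    ∧
    ((Jmat (fun _ : Fin 1 => Vnu ν)
          (NormedSpace.exp ((Complex.I * (Real.pi * z)) • !![1, 0; 0, -1])
            * NormedSpace.exp ((Complex.I * (Real.pi * x)) • !![0, 1; 1, 0])) 0 1
        - Jmat (fun _ : Fin 1 => Vnu ν)
          (NormedSpace.exp ((Complex.I * (Real.pi * z)) • !![1, 0; 0, -1])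
            * NormedSpace.exp ((Complex.I * (Real.pi * x)) • !![0, 1; 1, 0])) 1 0,
      Jmat (fun _ : Fin 1 => Vnu ν)
          (NormedSpace.exp ((Complex.I * (Real.pi * z)) • !![1, 0; 0, -1])
            * NormedSpace.exp ((Complex.I * (Real.pi * x)) • !![0, 1; 1, 0])) 0 1
        + Jmat (fun _ : Fin 1 => Vnu ν)
          (NormedSpace.exp ((Complex.I * (Real.pi * z)) • !![1, 0; 0, -1])
            * NormedSpace.exp ((Complex.I * (Real.pi * x)) • !![0, 1; 1, 0])) 1 0)
      = (a, 1 + ν ^ 2 - ((1 + ν ^ 2 - 2 * Real.cos (4 * Real.pi * z) * ν) / 2)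
          * (1 - a ^ 2 / (1 - ν ^ 2) ^ 2))) := by
  have hpos : 0 < 1 - ν ^ 2 := by nlinarith [hν.1, hν.2]
  have hne : (1 : ℝ) - ν ^ 2 ≠ 0 := ne_of_gt hpos
  set c := Real.cos (Real.pi * x) with hc
  set s := Real.sin (Real.pi * x) with hs
  have hcs : s ^ 2 + c ^ 2 = 1 := Real.sin_sq_add_cos_sq (Real.pi * x)
  have ha : a = (1 - ν ^ 2) * (c ^ 2 - s ^ 2) := by
    have h' : a / (1 - ν ^ 2) = 1 - 2 * s ^ 2 := by linarith
    field_simp at h'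
    linear_combination h' - (1 - ν ^ 2) * hcs
  set E := Complex.exp (Complex.I * ((Real.pi : ℂ) * z)) with hE
  have hEn : Complex.normSq E = 1 := by
    rw [hE, show Complex.I * ((Real.pi : ℂ) * z) = ((Real.pi * z : ℝ) : ℂ) * Complex.I by
      push_cast; ring, Complex.normSq_eq_norm_sq, Complex.norm_exp_ofReal_mul_I]
    norm_num
  have hnα : Complex.normSq (E * (c : ℂ)) = c ^ 2 := by
    rw [Complex.normSq_mul, hEn, Complex.normSq_ofReal]; ring
  have hnβ : Complex.normSq (Complex.I * E * (s : ℂ)) = s ^ 2 := by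
    rw [Complex.normSq_mul, Complex.normSq_mul, Complex.normSq_I, hEn, Complex.normSq_ofReal]
    ring
  rw [exp_prod_aux]
  refine ⟨Umat_mem (by rw [hnα, hnβ]; linarith), ?_⟩
  rw [J01_aux, J10_aux]
  have ht : ((E * (c : ℂ)) ^ 2 * (Complex.I * E * (s : ℂ)) ^ 2).re
      = -(Real.cos (4 * Real.pi * z) * (c ^ 2 * s ^ 2)) := by
    have hI : Complex.I ^ 2 = -1 := Complex.I_sq
    have h4 : (E * (c : ℂ)) ^ 2 * (Complex.I * E * (s : ℂ)) ^ 2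
        = -(((c ^ 2 * s ^ 2 : ℝ)) : ℂ) * E ^ 4 := by
      push_cast
      linear_combination ((c : ℂ) ^ 2 * (s : ℂ) ^ 2 * E ^ 4) * hI
    have hE4 : E ^ 4 = Complex.exp (((4 * Real.pi * z : ℝ) : ℂ) * Complex.I) := by
      rw [hE, ← Complex.exp_nat_mul]
      congr 1
      push_cast
      ring
    rw [h4, hE4, neg_mul, Complex.neg_re, Complex.re_ofReal_mul,
      Complex.exp_ofReal_mul_I_re]
    ring
  have hq : 1 - a ^ 2 / (1 - ν ^ 2) ^ 2 = 4 * (c ^ 2 * s ^ 2) := by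
    rw [ha]
    have hd : ((1 - ν ^ 2) * (c ^ 2 - s ^ 2)) ^ 2 / (1 - ν ^ 2) ^ 2 = (c ^ 2 - s ^ 2) ^ 2 := by
      field_simp
    rw [hd]
    linear_combination (-(s ^ 2 + c ^ 2 + 1)) * hcs
  simp only [Prod.mk.injEq]
  constructor
  · rw [key1_aux, hnα, hnβ, ha]
    linear_combination ((1 - ν ^ 2) * (c ^ 2 - s ^ 2)) * hcs
  · rw [key2_aux, hnα, hnβ, ht, hq]
    linear_combination ((1 + ν ^ 2) * (s ^ 2 + c ^ 2 + 1)) * hcs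

/-- Parametrization of the space of generators `Q` of the rank-one qubit
system, together with the explicit realizing unitary `U = exp(iπz·σ_z)·exp(iπx·σ_x)`. -/
theorem space_of_generators_param (ν : ℝ) (hν : ν ∈ Set.Ico (0 : ℝ) 1) :
    (Qset ν = {p : ℝ × ℝ | ∃ a s : ℝ, a ∈ Set.Icc (-(1 - ν ^ 2)) (1 - ν ^ 2) ∧
        s ∈ Set.Icc (-1 : ℝ) 1 ∧
        p = (a, 1 + ν ^ 2 - ((1 + ν ^ 2 - 2 * s * ν) / 2) * (1 - a ^ 2 / (1 - ν ^ 2) ^ 2))})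
    ∧
    ∀ x z a : ℝ, 1 - a / (1 - ν ^ 2) = 2 * Real.sin (Real.pi * x) ^ 2 →
      (NormedSpace.exp ((Complex.I * (Real.pi * z)) • !![1, 0; 0, -1])
          * NormedSpace.exp ((Complex.I * (Real.pi * x)) • !![0, 1; 1, 0])
        ∈ Matrix.specialUnitaryGroup (Fin 2) ℂ)
      ∧
      ((Jmat (fun _ : Fin 1 => Vnu ν)
            (NormedSpace.exp ((Complex.I * (Real.pi * z)) • !![1, 0; 0, -1])
              * NormedSpace.exp ((Complex.I * (Real.pi * x)) • !![0, 1; 1, 0])) 0 1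
          - Jmat (fun _ : Fin 1 => Vnu ν)
            (NormedSpace.exp ((Complex.I * (Real.pi * z)) • !![1, 0; 0, -1])
              * NormedSpace.exp ((Complex.I * (Real.pi * x)) • !![0, 1; 1, 0])) 1 0,
        Jmat (fun _ : Fin 1 => Vnu ν)
            (NormedSpace.exp ((Complex.I * (Real.pi * z)) • !![1, 0; 0, -1])
              * NormedSpace.exp ((Complex.I * (Real.pi * x)) • !![0, 1; 1, 0])) 0 1
          + Jmat (fun _ : Fin 1 => Vnu ν)
            (NormedSpace.exp ((Complex.I * (Real.pi * z)) • !![1, 0; 0, -1])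
              * NormedSpace.exp ((Complex.I * (Real.pi * x)) • !![0, 1; 1, 0])) 1 0)
        = (a, 1 + ν ^ 2 - ((1 + ν ^ 2 - 2 * Real.cos (4 * Real.pi * z) * ν) / 2)
            * (1 - a ^ 2 / (1 - ν ^ 2) ^ 2))) := by
  have hpos : 0 < 1 - ν ^ 2 := by nlinarith [hν.1, hν.2]
  have hne : (1 : ℝ) - ν ^ 2 ≠ 0 := ne_of_gt hpos
  constructor
  · ext p
    simp only [Qset, Set.mem_setOf_eq]
    constructor
    · rintro ⟨U, hU, rfl⟩
      obtain ⟨hUeq, hn⟩ := su2_form hU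
      rw [hUeq, J01_aux, J10_aux]
      set n1 := Complex.normSq (U 0 0) with hn1
      set n2 := Complex.normSq (U 0 1) with hn2
      have h1 : 0 ≤ n1 := Complex.normSq_nonneg _
      have h2 : 0 ≤ n2 := Complex.normSq_nonneg _
      set t := ((U 0 0) ^ 2 * (U 0 1) ^ 2).re with htdef
      have ht2 : t ^ 2 ≤ (n1 * n2) ^ 2 := by
        have h3 : t ^ 2 ≤ Complex.normSq ((U 0 0) ^ 2 * (U 0 1) ^ 2) := by
          rw [Complex.normSq_apply]
          nlinarith [sq_nonneg (((U 0 0) ^ 2 * (U 0 1) ^ 2).im)]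
        have h4 : Complex.normSq ((U 0 0) ^ 2 * (U 0 1) ^ 2) = (n1 * n2) ^ 2 := by
          rw [sq (U 0 0), sq (U 0 1), Complex.normSq_mul, Complex.normSq_mul,
            Complex.normSq_mul]
          ring
        linarith [h3, h4 ▸ h3]
      obtain ⟨s, hsmem, hst⟩ : ∃ s : ℝ, s ∈ Set.Icc (-1 : ℝ) 1 ∧ s * (n1 * n2) = -t := by
        by_cases h : n1 * n2 = 0
        · refine ⟨0, by constructor <;> norm_num, ?_⟩
          have : t = 0 := by nlinarith [ht2, sq_nonneg t]
          rw [this]; ring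
        · have hgt : 0 < n1 * n2 := lt_of_le_of_ne (mul_nonneg h1 h2) (Ne.symm h)
          have habs : -(n1 * n2) ≤ t ∧ t ≤ n1 * n2 := by
            constructor <;> nlinarith [ht2]
          refine ⟨-t / (n1 * n2), ⟨?_, ?_⟩, ?_⟩
          · rw [le_div_iff₀ hgt]; nlinarith [habs.2]
          · rw [div_le_one hgt]; nlinarith [habs.1]
          · exact div_mul_cancel₀ (-t) h
      refine ⟨(1 - ν ^ 2) * (n1 - n2), s, ⟨by nlinarith, by nlinarith⟩, hsmem, ?_⟩
      have hq : 1 - ((1 - ν ^ 2) * (n1 - n2)) ^ 2 / (1 - ν ^ 2) ^ 2 = 4 * (n1 * n2) := by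
        have hd : ((1 - ν ^ 2) * (n1 - n2)) ^ 2 / (1 - ν ^ 2) ^ 2 = (n1 - n2) ^ 2 := by
          field_simp
        rw [hd]
        linear_combination (-(n1 + n2 + 1)) * hn
      simp only [Prod.mk.injEq]
      constructor
      · rw [key1_aux]
        linear_combination ((1 - ν ^ 2) * (n1 - n2)) * hn
      · rw [key2_aux, hq]
        linear_combination ((1 + ν ^ 2) * (n1 + n2 + 1)) * hn - 4 * ν * hst
    · rintro ⟨a, s, ha, hs, rfl⟩
      have hd1 : a / (1 - ν ^ 2) ≤ 1 := by rw [div_le_one hpos]; exact ha.2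
      have hd2 : -1 ≤ a / (1 - ν ^ 2) := by rw [le_div_iff₀ hpos]; nlinarith [ha.1]
      set r := 1 - a / (1 - ν ^ 2) with hr
      have hr0 : 0 ≤ r / 2 := by simp only [hr]; linarith
      have hr1 : r / 2 ≤ 1 := by simp only [hr]; linarith
      set x := Real.arcsin (Real.sqrt (r / 2)) / Real.pi with hxdef
      set z := Real.arccos s / (4 * Real.pi) with hzdef
      have hpix : Real.pi * x = Real.arcsin (Real.sqrt (r / 2)) := by
        rw [hxdef]; field_simp
      have hx : 1 - a / (1 - ν ^ 2) = 2 * Real.sin (Real.pi * x) ^ 2 := by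
        rw [hpix, Real.sin_arcsin (by linarith [Real.sqrt_nonneg (r / 2)]) (Real.sqrt_le_one.mpr hr1),
          Real.sq_sqrt hr0]
        rw [← hr]; ring
      have hzz : Real.cos (4 * Real.pi * z) = s := by
        have h4 : 4 * Real.pi * z = Real.arccos s := by
          rw [hzdef]; field_simp
        rw [h4, Real.cos_arccos hs.1 hs.2]
      obtain ⟨hmem, hval⟩ := part2_aux ν hν x z a hx
      rw [hzz] at hval
      exact ⟨_, hmem, hval.symm⟩
  · intro x z a hxa
    exact part2_aux ν hν x z a hxa
end

section
/- Fix ν ∈ [0,1) (so that Ṽ = [[0,1],[ν,0]] is non-normal). Then Q = { (a,b) ∈ ℝ² : |a| ≤ 1−ν² and 1 + ν² − ½(1+ν)²·(1 − a²/(1−ν²)²) ≤ b ≤ 1 + ν² − ½(1−ν)²·(1 − a²/(1−ν²)²) }, i.e. the space of generators is exactly the region enclosed between the two parabolic segments a ↦ 1 + ν² − ½(1±ν)²·(1 − (a/(1−ν²))²) on a ∈ [−(1−ν²), 1−ν²]. -/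
open Matrix MeasureTheory
open scoped ComplexOrder

section Aux

lemma su2_param' (U : Matrix (Fin 2) (Fin 2) ℂ) (hU : U ∈ Matrix.specialUnitaryGroup (Fin 2) ℂ) :
    U 1 1 = (starRingEnd ℂ) (U 0 0) ∧ U 1 0 = -(starRingEnd ℂ) (U 0 1) ∧
    Complex.normSq (U 0 0) + Complex.normSq (U 0 1) = 1 := by
  rw [Matrix.mem_specialUnitaryGroup_iff] at hU
  obtain ⟨hu, hdet⟩ := hU
  have h1 : star U * U = 1 := (Matrix.mem_unitaryGroup_iff'.mp hu)
  have h2 : U * U.adjugate = 1 := by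
    rw [Matrix.mul_adjugate, hdet, one_smul]
  have hstar : star U = U.adjugate := by
    calc star U = star U * (U * U.adjugate) := by rw [h2, mul_one]
    _ = (star U * U) * U.adjugate := by rw [mul_assoc]
    _ = U.adjugate := by rw [h1, one_mul]
  have hadj := Matrix.adjugate_fin_two U
  have e00 : (star U) 0 0 = U 1 1 := by rw [hstar, hadj]; simp
  have e01 : (star U) 0 1 = -(U 0 1) := by rw [hstar, hadj]; simp
  have hd : U 1 1 = (starRingEnd ℂ) (U 0 0) := by
    have := e00
    rw [Matrix.star_apply] at this
    rw [← this]; simp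
  have hc : U 1 0 = -(starRingEnd ℂ) (U 0 1) := by
    have := e01
    rw [Matrix.star_apply] at this
    apply_fun (starRingEnd ℂ) at this
    exact (by simpa using this.symm : -(starRingEnd ℂ) (U 0 1) = U 1 0).symm
  refine ⟨hd, hc, ?_⟩
  have h00 : (star U * U) 0 0 = (1 : Matrix (Fin 2) (Fin 2) ℂ) 0 0 := by rw [h1]
  rw [Matrix.mul_apply, Fin.sum_univ_two] at h00
  simp only [Matrix.star_apply, Matrix.one_apply_eq] at h00
  rw [hc] at h00
  have : ((Complex.normSq (U 0 0) : ℂ) + (Complex.normSq (U 0 1) : ℂ)) = 1 := by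
    rw [← h00]
    simp only [RCLike.star_def, ← Complex.normSq_eq_conj_mul_self]
    ring_nf
    simp [← Complex.normSq_eq_conj_mul_self, Complex.normSq_conj]
  exact_mod_cast this

lemma entries' (ν : ℝ) (U : Matrix (Fin 2) (Fin 2) ℂ)
    (hd : U 1 1 = (starRingEnd ℂ) (U 0 0)) (hc : U 1 0 = -(starRingEnd ℂ) (U 0 1)) :
    (Uᴴ * Vnu ν * U) 0 1 = ((starRingEnd ℂ) (U 0 0))^2 - (ν : ℂ) * (U 0 1)^2 ∧
    (Uᴴ * Vnu ν * U) 1 0 = (ν : ℂ) * (U 0 0)^2 - ((starRingEnd ℂ) (U 0 1))^2 := by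
  constructor <;>
  · simp only [Vnu, Matrix.mul_apply, Fin.sum_univ_two, Matrix.conjTranspose_apply,
      Matrix.cons_val_zero, Matrix.cons_val_one, Matrix.head_cons, Matrix.head_fin_const,
      Matrix.cons_val_fin_one, Matrix.star_apply, RCLike.star_def]
    rw [hd, hc]
    simp
    ring

lemma nsq1' (ν : ℝ) (α β : ℂ) :
    Complex.normSq (((starRingEnd ℂ) α)^2 - (ν : ℂ) * β^2) =
      Complex.normSq α^2 + ν^2 * Complex.normSq β^2
        - 2*ν*(((starRingEnd ℂ) (α*β))^2).re ∧
    Complex.normSq ((ν : ℂ) * α^2 - ((starRingEnd ℂ) β)^2) =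
      ν^2 * Complex.normSq α^2 + Complex.normSq β^2
        - 2*ν*(((starRingEnd ℂ) (α*β))^2).re := by
  constructor <;>
  · simp only [Complex.normSq_apply, Complex.sub_re, Complex.sub_im, Complex.mul_re,
      Complex.mul_im, Complex.ofReal_re, Complex.ofReal_im, Complex.conj_re, Complex.conj_im,
      pow_two]
    ring

lemma cbound' (α β : ℂ) :
    |(((starRingEnd ℂ) (α*β))^2).re| ≤ Complex.normSq α * Complex.normSq β := by
  calc |(((starRingEnd ℂ) (α*β))^2).re| ≤ ‖((starRingEnd ℂ) (α*β))^2‖ :=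
        Complex.abs_re_le_norm _
    _ = Complex.normSq α * Complex.normSq β := by
        rw [norm_pow, Complex.norm_conj, norm_mul, mul_pow, Complex.sq_norm, Complex.sq_norm]

lemma key_fwd' (ν S T c a b : ℝ) (hν0 : 0 ≤ ν) (hν1 : ν < 1) (hS : 0 ≤ S) (hT : 0 ≤ T)
    (hST : S + T = 1) (hc : |c| ≤ S*T)
    (ha : a = (1 - ν^2) * (S^2 - T^2)) (hb : b = (1+ν^2)*(S^2+T^2) - 4*ν*c) :
    |a| ≤ 1 - ν^2 ∧
    1 + ν^2 - (1+ν)^2/2 * (1 - a^2/(1-ν^2)^2) ≤ b ∧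
    b ≤ 1 + ν^2 - (1-ν)^2/2 * (1 - a^2/(1-ν^2)^2) := by
  have hpos : 0 < 1 - ν^2 := by nlinarith
  have hne : (1 - ν^2)^2 ≠ 0 := by positivity
  have ha' : a = (1 - ν^2) * (S - T) := by
    rw [ha]; linear_combination (1-ν^2)*(S-T)*hST
  obtain ⟨hc1, hc2⟩ := abs_le.mp hc
  have hfrac : a^2/(1-ν^2)^2 = (S-T)^2 := by
    rw [ha', mul_pow, mul_div_cancel_left₀ _ hne]
  have hT1 : T = 1 - S := by linarith
  subst hT1
  refine ⟨?_, ?_, ?_⟩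
  · rw [ha', abs_mul, abs_of_pos hpos]
    have : |S - (1-S)| ≤ 1 := abs_le.mpr ⟨by linarith, by linarith⟩
    nlinarith
  · rw [hfrac, hb]
    nlinarith [mul_nonneg hν0 (sub_nonneg.mpr hc2)]
  · rw [hfrac, hb]
    nlinarith [mul_nonneg hν0 (by linarith : (0:ℝ) ≤ S*(1-S) + c)]

lemma key_rev' (ν a b : ℝ) (hν0 : 0 ≤ ν) (hν1 : ν < 1)
    (h1 : |a| ≤ 1 - ν^2)
    (h2 : 1 + ν^2 - (1+ν)^2/2 * (1 - a^2/(1-ν^2)^2) ≤ b)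
    (h3 : b ≤ 1 + ν^2 - (1-ν)^2/2 * (1 - a^2/(1-ν^2)^2)) :
    ∃ S T c, 0 ≤ S ∧ 0 ≤ T ∧ S + T = 1 ∧ |c| ≤ S*T ∧
      a = (1-ν^2)*(S^2-T^2) ∧ b = (1+ν^2)*(S^2+T^2) - 4*ν*c := by
  have hpos : 0 < 1 - ν^2 := by nlinarith
  have hne : (1 - ν^2)^2 ≠ 0 := by positivity
  set d : ℝ := a / (1 - ν^2) with hdd
  have had : a = (1 - ν^2) * d := by rw [hdd, mul_div_cancel₀ a hpos.ne']
  have hd1 : |d| ≤ 1 := by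
    rw [hdd, abs_div, abs_of_pos hpos, div_le_one hpos]; exact h1
  obtain ⟨hdl, hdr⟩ := abs_le.mp hd1
  have hfrac : a^2/(1-ν^2)^2 = d^2 := by
    rw [had, mul_pow, mul_div_cancel_left₀ _ hne]
  rw [hfrac] at h2 h3
  rcases eq_or_lt_of_le hν0 with hz | hp
  · refine ⟨(1+d)/2, (1-d)/2, 0, by linarith, by linarith, by ring, ?_, ?_, ?_⟩
    · simp only [abs_zero]; nlinarith
    · rw [had]; ring
    · rw [← hz] at h2 h3 ⊢; nlinarith
  · refine ⟨(1+d)/2, (1-d)/2, ((1+ν^2)*((1+d^2)/2) - b)/(4*ν),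
      by linarith, by linarith, by ring, ?_, ?_, ?_⟩
    · rw [abs_div, abs_of_pos (by linarith : (0:ℝ) < 4*ν),
        div_le_iff₀ (by linarith : (0:ℝ) < 4*ν), abs_le]
      constructor <;> nlinarith
    · rw [had]; ring
    · field_simp; ring

lemma mem_su2' (α β : ℂ) (hn : Complex.normSq α + Complex.normSq β = 1) :
    !![α, β; -(starRingEnd ℂ) β, (starRingEnd ℂ) α] ∈ Matrix.specialUnitaryGroup (Fin 2) ℂ := by
  have hn' : ((Complex.normSq α : ℂ)) + (Complex.normSq β : ℂ) = 1 := by exact_mod_cast hn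
  have hn'' : (starRingEnd ℂ) α * α + (starRingEnd ℂ) β * β = 1 := by
    rw [← Complex.normSq_eq_conj_mul_self, ← Complex.normSq_eq_conj_mul_self]; exact hn'
  rw [Matrix.mem_specialUnitaryGroup_iff]
  constructor
  · rw [Matrix.mem_unitaryGroup_iff']
    ext i j
    fin_cases i <;> fin_cases j <;>
      simp [Matrix.mul_apply, Fin.sum_univ_two, Matrix.star_apply, Matrix.one_apply]
    · show (starRingEnd ℂ) α * α + β * (starRingEnd ℂ) β = 1
      linear_combination hn''
    · show (starRingEnd ℂ) α * β + -(β * (starRingEnd ℂ) α) = 0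
      ring
    · show (starRingEnd ℂ) β * α + -(α * (starRingEnd ℂ) β) = 0
      ring
    · show (starRingEnd ℂ) β * β + α * (starRingEnd ℂ) α = 1
      linear_combination hn''
  · rw [Matrix.det_fin_two_of]
    linear_combination hn''

lemma re_calc' (s p q : ℝ) :
    (((starRingEnd ℂ) ((s:ℂ) * ((p:ℂ) + (q:ℂ)*Complex.I)))^2).re = s^2*(p^2 - q^2) := by
  simp only [pow_two, _root_.map_mul, map_add, Complex.conj_ofReal, Complex.conj_I,
    Complex.mul_re, Complex.mul_im, Complex.add_re, Complex.add_im, Complex.ofReal_re,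
    Complex.ofReal_im, Complex.I_re, Complex.I_im, Complex.neg_re, Complex.neg_im]
  ring

lemma construct' (S T c : ℝ) (hS : 0 ≤ S) (hT : 0 ≤ T) (hc : |c| ≤ S*T) :
    ∃ α β : ℂ, Complex.normSq α = S ∧ Complex.normSq β = T ∧
      (((starRingEnd ℂ) (α*β))^2).re = c := by
  rcases eq_or_lt_of_le hS with hz | hSp
  · have hc0 : c = 0 := by
      rw [← hz, zero_mul] at hc; exact abs_eq_zero.mp (le_antisymm hc (abs_nonneg c))
    refine ⟨0, (Real.sqrt T : ℂ), by simp [← hz], ?_, by simp [hc0]⟩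
    simp [Complex.normSq_apply, Real.mul_self_sqrt hT]
  · set u : ℝ := c / S with hu
    have hu1 : |u| ≤ T := by
      rw [hu, abs_div, abs_of_pos hSp, div_le_iff₀ hSp]
      calc |c| ≤ S * T := hc
        _ = T * S := mul_comm _ _
    obtain ⟨hul, hur⟩ := abs_le.mp hu1
    have hp2 : (0:ℝ) ≤ (T + u)/2 := by linarith
    have hq2 : (0:ℝ) ≤ (T - u)/2 := by linarith
    set p := Real.sqrt ((T+u)/2) with hp
    set q := Real.sqrt ((T-u)/2) with hq
    have e1 : p^2 = (T+u)/2 := Real.sq_sqrt hp2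
    have e2 : q^2 = (T-u)/2 := Real.sq_sqrt hq2
    have e3 : (Real.sqrt S)^2 = S := Real.sq_sqrt hS
    refine ⟨(Real.sqrt S : ℂ), (p:ℂ) + (q:ℂ)*Complex.I, ?_, ?_, ?_⟩
    · simp only [Complex.normSq_ofReal, ← pow_two, e3]
    · rw [Complex.normSq_add_mul_I, e1, e2]; ring
    · rw [re_calc', e1, e2, e3, hu]
      field_simp
      ring

lemma Jmat_eq' (ν : ℝ) (U : Matrix (Fin 2) (Fin 2) ℂ) (i j : Fin 2) :
    Jmat (fun _ : Fin 1 => Vnu ν) U i j = Complex.normSq ((Uᴴ * Vnu ν * U) i j) := by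
  simp [Jmat, Complex.sq_norm]

end Aux

/-- The space of generators `Q` is exactly the region enclosed between
the two parabolic segments `a ↦ 1 + ν² − ½(1±ν)²(1 − (a/(1−ν²))²)` over
`a ∈ [−(1−ν²), 1−ν²]`. -/
theorem space_of_generators_region (ν : ℝ) (hν : ν ∈ Set.Ico (0 : ℝ) 1) :
    Qset ν = {p : ℝ × ℝ | |p.1| ≤ 1 - ν ^ 2 ∧
      1 + ν ^ 2 - (1 + ν) ^ 2 / 2 * (1 - p.1 ^ 2 / (1 - ν ^ 2) ^ 2) ≤ p.2 ∧
      p.2 ≤ 1 + ν ^ 2 - (1 - ν) ^ 2 / 2 * (1 - p.1 ^ 2 / (1 - ν ^ 2) ^ 2)} := by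
  obtain ⟨hν0, hν1⟩ := hν
  ext p
  simp only [Qset, Set.mem_setOf_eq]
  constructor
  · rintro ⟨U, hU, hp⟩
    obtain ⟨hd, hcU, hn⟩ := su2_param' U hU
    obtain ⟨he1, he2⟩ := entries' ν U hd hcU
    have hJ1 : Jmat (fun _ : Fin 1 => Vnu ν) U 0 1 =
        Complex.normSq (U 0 0)^2 + ν^2 * Complex.normSq (U 0 1)^2
          - 2*ν*(((starRingEnd ℂ) (U 0 0 * U 0 1))^2).re := by
      rw [Jmat_eq', he1, (nsq1' ν (U 0 0) (U 0 1)).1]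
    have hJ2 : Jmat (fun _ : Fin 1 => Vnu ν) U 1 0 =
        ν^2 * Complex.normSq (U 0 0)^2 + Complex.normSq (U 0 1)^2
          - 2*ν*(((starRingEnd ℂ) (U 0 0 * U 0 1))^2).re := by
      rw [Jmat_eq', he2, (nsq1' ν (U 0 0) (U 0 1)).2]
    have key := key_fwd' ν (Complex.normSq (U 0 0)) (Complex.normSq (U 0 1))
      ((((starRingEnd ℂ) (U 0 0 * U 0 1))^2).re)
      (Jmat (fun _ : Fin 1 => Vnu ν) U 0 1 - Jmat (fun _ : Fin 1 => Vnu ν) U 1 0)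
      (Jmat (fun _ : Fin 1 => Vnu ν) U 0 1 + Jmat (fun _ : Fin 1 => Vnu ν) U 1 0)
      hν0 hν1 (Complex.normSq_nonneg _) (Complex.normSq_nonneg _) hn (cbound' _ _)
      (by rw [hJ1, hJ2]; ring) (by rw [hJ1, hJ2]; ring)
    rw [hp]
    exact key
  · rintro ⟨h1, h2, h3⟩
    obtain ⟨S, T, c, hS, hT, hST, hc, ha, hb⟩ := key_rev' ν p.1 p.2 hν0 hν1 h1 h2 h3
    obtain ⟨α, β, hα, hβ, hre⟩ := construct' S T c hS hT hc
    refine ⟨!![α, β; -(starRingEnd ℂ) β, (starRingEnd ℂ) α],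
      mem_su2' α β (by rw [hα, hβ]; exact hST), ?_⟩
    set U := !![α, β; -(starRingEnd ℂ) β, (starRingEnd ℂ) α] with hUdef
    have h00 : U 0 0 = α := by simp [hUdef]
    have h01 : U 0 1 = β := by simp [hUdef]
    have hd : U 1 1 = (starRingEnd ℂ) (U 0 0) := by simp [hUdef]
    have hcU : U 1 0 = -(starRingEnd ℂ) (U 0 1) := by simp [hUdef]
    obtain ⟨he1, he2⟩ := entries' ν U hd hcU
    have hJ1 : Jmat (fun _ : Fin 1 => Vnu ν) U 0 1 = S^2 + ν^2*T^2 - 2*ν*c := by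
      rw [Jmat_eq', he1, h00, h01, (nsq1' ν α β).1, hα, hβ, hre]
    have hJ2 : Jmat (fun _ : Fin 1 => Vnu ν) U 1 0 = ν^2*S^2 + T^2 - 2*ν*c := by
      rw [Jmat_eq', he2, h00, h01, (nsq1' ν α β).2, hα, hβ, hre]
    rw [Prod.ext_iff]
    constructor
    · rw [hJ1, hJ2, ha]; ring
    · rw [hJ1, hJ2, hb]; ring
end

section
/- Let V_1,…,V_r ∈ M_n(ℂ) and let σ ∈ ℝ^n be the vector of eigenvalues (with multiplicity) of the Hermitian matrix Σ_{k=1}^r [V_k, V_k*] = Σ_{k=1}^r (V_kV_k* − V_k*V_k). Then the set of achievable derivatives at the maximally mixed state is the convex polytope derv((1/n,…,1/n)) = conv{ (1/n)·(σ_{π(1)},…,σ_{π(n)}) : π a permutation of {1,…,n} }. -/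
open Matrix MeasureTheory
open scoped ComplexOrder

namespace SHaux

open Finset Matrix

set_option linter.unusedSectionVars false
set_option maxHeartbeats 1000000

variable {α : Type} [Fintype α] [DecidableEq α]

def maj (x y : α → ℝ) : Prop :=
  (∑ i, y i = ∑ i, x i) ∧
    ∀ S : Finset α, ∃ T : Finset α, T.card = S.card ∧ ∑ i ∈ S, y i ≤ ∑ i ∈ T, x i

lemma exists_maximizer (x : α → ℝ) {j : ℕ} (hj : j ≤ Fintype.card α) :
    ∃ T : Finset α, T.card = j ∧ ∀ T' : Finset α, T'.card = j →
      ∑ i ∈ T', x i ≤ ∑ i ∈ T, x i := by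
  obtain ⟨t, -, ht⟩ := Finset.exists_subset_card_eq (by simpa using hj : j ≤ (univ : Finset α).card)
  obtain ⟨T, hT, hmax⟩ := Finset.exists_max_image (univ.powersetCard j)
    (fun T => ∑ i ∈ T, x i) ⟨t, by simpa [Finset.mem_powersetCard_univ] using ht⟩
  refine ⟨T, by simpa [Finset.mem_powersetCard_univ] using hT, fun T' hT' => ?_⟩
  exact hmax T' (by simpa [Finset.mem_powersetCard_univ] using hT')

lemma exchange {x : α → ℝ} {j : ℕ} {T : Finset α}
    (hTc : T.card = j) (hTm : ∀ T' : Finset α, T'.card = j → ∑ i ∈ T', x i ≤ ∑ i ∈ T, x i)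
    {a c : α} (ha : a ∈ T) (hc : c ∉ T) : x c ≤ x a := by
  have hcT : c ∉ T.erase a := fun h => hc (Finset.mem_of_mem_erase h)
  have hcard : (insert c (T.erase a)).card = j := by
    rw [Finset.card_insert_of_notMem hcT, Finset.card_erase_of_mem ha, hTc]
    have : 1 ≤ j := hTc ▸ Finset.card_pos.2 ⟨a, ha⟩
    omega
  have := hTm _ hcard
  rw [Finset.sum_insert hcT] at this
  have herase : ∑ i ∈ T.erase a, x i = ∑ i ∈ T, x i - x a := by
    have := Finset.add_sum_erase T x ha
    linarith
  linarith

lemma maj_le_max {x y : α → ℝ} (h : maj x y) {S T : Finset α}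
    (hTm : ∀ T' : Finset α, T'.card = T.card → ∑ i ∈ T', x i ≤ ∑ i ∈ T, x i)
    (hST : S.card = T.card) :
    ∑ i ∈ S, y i ≤ ∑ i ∈ T, x i := by
  obtain ⟨T', hT'c, hT'⟩ := h.2 S
  exact hT'.trans (hTm T' (by omega))

lemma maj_comp_perm {x y : α → ℝ} (h : maj x y) (e : Equiv.Perm α) :
    maj x (y ∘ e) := by
  refine ⟨by rw [← h.1]; exact Equiv.sum_comp e y, fun S => ?_⟩
  obtain ⟨T, hTc, hT⟩ := h.2 (S.image e)
  refine ⟨T, by rwa [Finset.card_image_of_injective _ e.injective] at hTc, ?_⟩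
  calc ∑ i ∈ S, (y ∘ e) i = ∑ i ∈ S.image e, y i := by
        rw [Finset.sum_image (fun i _ j _ hij => e.injective hij)]; rfl
    _ ≤ _ := hT

lemma maj_of_mem_convexHull {x : α → ℝ} {y : α → ℝ}
    (hy : y ∈ convexHull ℝ {w : α → ℝ | ∃ π : Equiv.Perm α, w = x ∘ π}) : maj x y := by
  have hconv : Convex ℝ {y : α → ℝ | maj x y} := by
    rintro y₁ hy₁ y₂ hy₂ p q hp hq hpq
    constructor
    · simp only [Pi.add_apply, Pi.smul_apply, smul_eq_mul, Finset.sum_add_distrib,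
        ← Finset.mul_sum, hy₁.1, hy₂.1]
      rw [← add_mul, hpq, one_mul]
    · intro S
      obtain ⟨T₁, hT₁c, hT₁⟩ := hy₁.2 S
      obtain ⟨T₂, hT₂c, hT₂⟩ := hy₂.2 S
      have hsum : ∑ i ∈ S, (p • y₁ + q • y₂) i
          = p * ∑ i ∈ S, y₁ i + q * ∑ i ∈ S, y₂ i := by
        simp [Finset.mul_sum, Finset.sum_add_distrib]
      rcases le_total (∑ i ∈ T₁, x i) (∑ i ∈ T₂, x i) with hle | hle
      · exact ⟨T₂, hT₂c, by
          rw [hsum]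
          calc p * ∑ i ∈ S, y₁ i + q * ∑ i ∈ S, y₂ i
              ≤ p * ∑ i ∈ T₂, x i + q * ∑ i ∈ T₂, x i := by
                have h1 : p * ∑ i ∈ S, y₁ i ≤ p * ∑ i ∈ T₂, x i :=
                  mul_le_mul_of_nonneg_left (hT₁.trans hle) hp
                have h2 : q * ∑ i ∈ S, y₂ i ≤ q * ∑ i ∈ T₂, x i :=
                  mul_le_mul_of_nonneg_left hT₂ hq
                linarith
            _ = ∑ i ∈ T₂, x i := by rw [← add_mul, hpq, one_mul]⟩
      · exact ⟨T₁, hT₁c, by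
          rw [hsum]
          calc p * ∑ i ∈ S, y₁ i + q * ∑ i ∈ S, y₂ i
              ≤ p * ∑ i ∈ T₁, x i + q * ∑ i ∈ T₁, x i := by
                have h1 : p * ∑ i ∈ S, y₁ i ≤ p * ∑ i ∈ T₁, x i :=
                  mul_le_mul_of_nonneg_left hT₁ hp
                have h2 : q * ∑ i ∈ S, y₂ i ≤ q * ∑ i ∈ T₁, x i :=
                  mul_le_mul_of_nonneg_left (hT₂.trans hle) hq
                linarith
            _ = ∑ i ∈ T₁, x i := by rw [← add_mul, hpq, one_mul]⟩
  have hgen : {w : α → ℝ | ∃ π : Equiv.Perm α, w = x ∘ π} ⊆ {y : α → ℝ | maj x y} := by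
    rintro w ⟨π, rfl⟩
    refine ⟨Equiv.sum_comp π x, fun S => ?_⟩
    refine ⟨S.image π, Finset.card_image_of_injective _ π.injective, ?_⟩
    rw [Finset.sum_image (fun i _ j _ hij => π.injective hij)]
    rfl
  exact convexHull_min hgen hconv hy


lemma sum_if_of_mem {x : α → ℝ} {b : α} {γ : ℝ} {T : Finset α} (hbT : b ∈ T) :
    ∑ i ∈ T, (if i = b then γ else x i) = γ + ∑ i ∈ T.erase b, x i := by
  rw [← Finset.add_sum_erase T _ hbT]
  simp only [if_pos rfl]
  congr 1
  exact Finset.sum_congr rfl fun i hi => if_neg (Finset.ne_of_mem_erase hi)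

lemma sum_if_of_not_mem {x : α → ℝ} {b : α} {γ : ℝ} {T : Finset α} (hbT : b ∉ T) :
    ∑ i ∈ T, (if i = b then γ else x i) = ∑ i ∈ T, x i :=
  Finset.sum_congr rfl fun i hi => if_neg (fun h => hbT (by subst h; exact hi))

lemma sum_erase_eq {x : α → ℝ} {T : Finset α} {a : α} (ha : a ∈ T) :
    ∑ i ∈ T.erase a, x i = ∑ i ∈ T, x i - x a := by
  have := Finset.add_sum_erase T x ha
  linarith

/-- The key combinatorial reduction for Horn's theorem. -/
lemma key_reduction {x y : α → ℝ} (hmaj : maj x y) (a b : α) (β : ℝ)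
    (hya : y a = β) (haβ : β ≤ x a) (hamin : ∀ i, β ≤ x i → x a ≤ x i)
    (hb : (b ≠ a ∧ x b < β ∧ ∀ i, x i < β → x i ≤ x b) ∨ (b = a ∧ x a = β ∧ ∀ i, β ≤ x i)) :
    ∀ S : Finset α, a ∉ S → ∃ T : Finset α, a ∉ T ∧ T.card = S.card ∧
      ∑ i ∈ S, y i ≤ ∑ i ∈ T, (if i = b then x a + x b - β else x i) := by
  intro S haS
  set γ := x a + x b - β with hγ
  have hcard : S.card + 1 ≤ Fintype.card α := by
    have h1 : S ⊆ univ.erase a := fun i hi => Finset.mem_erase.2 ⟨fun h => haS (h ▸ hi), mem_univ i⟩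
    have h2 := Finset.card_le_card h1
    rw [Finset.card_erase_of_mem (mem_univ a)] at h2
    have h3 : 1 ≤ Fintype.card α := Fintype.card_pos_iff.2 ⟨a⟩
    simp only [Finset.card_univ] at h2
    omega
  obtain ⟨T₀, hT₀c, hT₀m⟩ := exists_maximizer x (Nat.le_of_succ_le hcard)
  obtain ⟨T₁, hT₁c, hT₁m⟩ := exists_maximizer x hcard
  have hS0 : ∑ i ∈ S, y i ≤ ∑ i ∈ T₀, x i := by
    obtain ⟨T', hT'c, hT'⟩ := hmaj.2 S
    exact hT'.trans (hT₀m T' (by omega))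
  have hS1 : ∑ i ∈ S, y i + β ≤ ∑ i ∈ T₁, x i := by
    obtain ⟨T', hT'c, hT'⟩ := hmaj.2 (insert a S)
    rw [Finset.sum_insert haS, hya] at hT'
    have := hT'.trans (hT₁m T' (by rw [hT'c, Finset.card_insert_of_notMem haS]))
    linarith
  have hxxge : ∀ i, i ≠ a → x i ≤ (if i = b then γ else x i) := by
    intro i hia
    by_cases hib : i = b
    · rw [if_pos hib]
      subst hib
      rcases hb with ⟨-, hbβ, -⟩ | ⟨hba, -, -⟩
      · linarith
      · exact absurd hba hia
    · rw [if_neg hib]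
  by_cases haT₀ : a ∈ T₀
  · -- hard case : a ∈ T₀
    have hT₁T₀ : ∃ c, c ∈ T₁ ∧ c ∉ T₀ := by
      by_contra h
      push_neg at h
      have hsub : T₁ ⊆ T₀ := fun c hc => h c hc
      have := Finset.card_le_card hsub
      omega
    obtain ⟨c, hcT₁, hcT₀⟩ := hT₁T₀
    have hca : c ≠ a := fun h => hcT₀ (h ▸ haT₀)
    have hcxa : x c ≤ x a := exchange hT₀c hT₀m haT₀ hcT₀
    have hchain : ∑ i ∈ T₁, x i ≤ ∑ i ∈ T₀, x i + x c := by
      have h1 : ∑ i ∈ T₁.erase c, x i ≤ ∑ i ∈ T₀, x i := by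
        refine hT₀m _ ?_
        rw [Finset.card_erase_of_mem hcT₁]
        omega
      have h2 := sum_erase_eq (x := x) hcT₁
      linarith
    by_cases hcβ : β ≤ x c
    · -- c is a "large" element : swap it for a in T₀
      have hxa_le : x a ≤ x c := hamin c hcβ
      have hcerase : c ∉ T₀.erase a := fun h => hcT₀ (Finset.mem_of_mem_erase h)
      refine ⟨insert c (T₀.erase a), ?_, ?_, ?_⟩
      · intro h
        rcases Finset.mem_insert.1 h with h | h
        · exact hca h.symm
        · exact (Finset.mem_erase.1 h).1 rfl
      · rw [Finset.card_insert_of_notMem hcerase, Finset.card_erase_of_mem haT₀]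
        have : 1 ≤ T₀.card := Finset.card_pos.2 ⟨a, haT₀⟩
        omega
      · have hTx : ∑ i ∈ T₀, x i ≤ ∑ i ∈ insert c (T₀.erase a), x i := by
          rw [Finset.sum_insert hcerase, sum_erase_eq haT₀]
          linarith
        have hTxx : ∑ i ∈ insert c (T₀.erase a), x i
            ≤ ∑ i ∈ insert c (T₀.erase a), (if i = b then γ else x i) := by
          refine Finset.sum_le_sum fun i hi => hxxge i ?_
          intro h; subst h
          rcases Finset.mem_insert.1 hi with h | h
          · exact hca h.symm
          · exact (Finset.mem_erase.1 h).1 rfl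
        linarith
    · push_neg at hcβ
      have hb' : b ≠ a ∧ x b < β ∧ ∀ i, x i < β → x i ≤ x b := by
        rcases hb with h | ⟨-, -, hall⟩
        · exact h
        · exact absurd (hall c) (by linarith)
      obtain ⟨hba, hbβ, hbmax⟩ := hb'
      have hcb : x c ≤ x b := hbmax c hcβ
      by_cases hbT₀ : b ∈ T₀
      · -- replace a by c; b stays and gets value γ
        have hcb' : c ≠ b := fun h => hcT₀ (h ▸ hbT₀)
        have hcerase : c ∉ T₀.erase a := fun h => hcT₀ (Finset.mem_of_mem_erase h)
        refine ⟨insert c (T₀.erase a), ?_, ?_, ?_⟩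
        · intro h
          rcases Finset.mem_insert.1 h with h | h
          · exact hca h.symm
          · exact (Finset.mem_erase.1 h).1 rfl
        · rw [Finset.card_insert_of_notMem hcerase, Finset.card_erase_of_mem haT₀]
          have : 1 ≤ T₀.card := Finset.card_pos.2 ⟨a, haT₀⟩
          omega
        · have hbmem : b ∈ insert c (T₀.erase a) :=
            Finset.mem_insert_of_mem (Finset.mem_erase.2 ⟨hba, hbT₀⟩)
          rw [sum_if_of_mem hbmem, Finset.erase_insert_of_ne hcb']
          have hberase : b ∈ T₀.erase a := Finset.mem_erase.2 ⟨hba, hbT₀⟩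
          have hc2 : c ∉ (T₀.erase a).erase b := fun h =>
            hcT₀ (Finset.mem_of_mem_erase (Finset.mem_of_mem_erase h))
          rw [Finset.sum_insert hc2, sum_erase_eq hberase, sum_erase_eq haT₀]
          linarith
      · -- replace a by b
        have hberase : b ∉ T₀.erase a := fun h => hbT₀ (Finset.mem_of_mem_erase h)
        refine ⟨insert b (T₀.erase a), ?_, ?_, ?_⟩
        · intro h
          rcases Finset.mem_insert.1 h with h | h
          · exact hba h.symm
          · exact (Finset.mem_erase.1 h).1 rfl
        · rw [Finset.card_insert_of_notMem hberase, Finset.card_erase_of_mem haT₀]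
          have : 1 ≤ T₀.card := Finset.card_pos.2 ⟨a, haT₀⟩
          omega
        · rw [sum_if_of_mem (Finset.mem_insert_self b _), Finset.erase_insert hberase,
            sum_erase_eq haT₀]
          linarith
  · -- easy case : a ∉ T₀
    refine ⟨T₀, haT₀, hT₀c, hS0.trans (Finset.sum_le_sum fun i hi =>
      hxxge i (fun h => haT₀ (h ▸ hi)))⟩


lemma three_split {a b : α} (hab : a ≠ b) (f : α → ℝ) :
    ∑ k, f k = f a + f b + ∑ k ∈ (univ.erase a).erase b, f k := by
  rw [← Finset.add_sum_erase univ f (mem_univ a),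
    ← Finset.add_sum_erase (univ.erase a) f (Finset.mem_erase.2 ⟨hab.symm, mem_univ b⟩), add_assoc]

/-- Embedded Givens rotation achieving a prescribed diagonal entry. -/
lemma rotation_lemma (x : α → ℝ) (a b : α) (hab : a ≠ b) (c : ℝ)
    (hbc : x b ≤ c) (hca : c ≤ x a) :
    ∃ R : Matrix α α ℂ, R ∈ Matrix.unitaryGroup α ℂ ∧
      (star R * Matrix.diagonal (fun i => (x i : ℂ)) * R) a a = (c : ℂ) ∧
      ∀ i j, i ≠ a → j ≠ a →
        (star R * Matrix.diagonal (fun i => (x i : ℂ)) * R) i j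
          = Matrix.diagonal (fun i => (((if i = b then x a + x b - c else x i) : ℝ) : ℂ)) i j := by
  have hba : x b ≤ x a := hbc.trans hca
  set t : ℝ := (c - x b) / (x a - x b) with ht
  have ht0 : 0 ≤ t := div_nonneg (by linarith) (by linarith)
  have ht1 : t ≤ 1 := by
    rcases eq_or_lt_of_le hba with heq | hlt
    · have : x a - x b = 0 := by linarith
      rw [ht, this, div_zero]; norm_num
    · rw [ht, div_le_one (by linarith)]; linarith
  have hkey : t * (x a - x b) = c - x b := by
    rcases eq_or_lt_of_le hba with heq | hlt
    · have h1 : x a - x b = 0 := by linarith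
      have h2 : c - x b = 0 := by
        have : c ≤ x b := heq ▸ hca
        linarith
      rw [h1, h2, mul_zero]
    · exact div_mul_cancel₀ _ (by linarith)
  set s : ℝ := Real.sqrt t with hs
  set s' : ℝ := Real.sqrt (1 - t) with hs'
  have hss : s * s = t := Real.mul_self_sqrt ht0
  have hss' : s' * s' = 1 - t := Real.mul_self_sqrt (by linarith)
  set Rr : Matrix α α ℝ := fun i j =>
    if i = a then (if j = a then s else if j = b then -s' else 0)
    else if i = b then (if j = a then s' else if j = b then s else 0)
    else if i = j then 1 else 0 with hRr
  set R : Matrix α α ℂ := fun i j => ((Rr i j : ℝ) : ℂ) with hR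
  -- row structure for rows outside {a, b}
  have hrow : ∀ k, k ≠ a → k ≠ b → ∀ i, Rr k i = if k = i then 1 else 0 := by
    intro k hka hkb i
    simp [hRr, hka, hkb]
  -- generic entry formula for star R * R
  have hSRR : ∀ i j, (star R * R) i j =
      ((Rr a i * Rr a j + Rr b i * Rr b j +
        (if i ∈ (univ.erase a).erase b then (if i = j then 1 else 0) else 0) : ℝ) : ℂ) := by
    intro i j
    have : (star R * R) i j = ∑ k, ((Rr k i * Rr k j : ℝ) : ℂ) := by
      rw [Matrix.mul_apply]
      refine Finset.sum_congr rfl fun k _ => ?_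
      rw [Matrix.star_apply, hR]
      simp only [Complex.star_def, Complex.conj_ofReal]
      push_cast
      ring
    rw [this, ← Complex.ofReal_sum]
    congr 1
    rw [three_split hab]
    congr 1
    have : ∀ k ∈ (univ.erase a).erase b, Rr k i * Rr k j
        = if k = i then (if k = j then 1 else 0) else 0 := by
      intro k hk
      have hkb : k ≠ b := Finset.ne_of_mem_erase hk
      have hka' : k ≠ a := Finset.ne_of_mem_erase (Finset.mem_of_mem_erase hk)
      rw [hrow k hka' hkb i, hrow k hka' hkb j]
      split_ifs with h1 h2 <;> simp_all
    rw [Finset.sum_congr rfl this]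
    rw [Finset.sum_ite_eq' ((univ.erase a).erase b) i (fun k => if k = j then 1 else 0)]
  -- generic entry formula for star R * D * R
  have hSDR : ∀ i j, (star R * Matrix.diagonal (fun i => (x i : ℂ)) * R) i j =
      ((Rr a i * x a * Rr a j + Rr b i * x b * Rr b j +
        (if i ∈ (univ.erase a).erase b then (if i = j then x i else 0) else 0) : ℝ) : ℂ) := by
    intro i j
    have hDR : ∀ k, (Matrix.diagonal (fun i => (x i : ℂ)) * R) k j = (x k : ℂ) * R k j := by
      intro k
      rw [Matrix.diagonal_mul]
    have : (star R * Matrix.diagonal (fun i => (x i : ℂ)) * R) i j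
        = ∑ k, ((Rr k i * x k * Rr k j : ℝ) : ℂ) := by
      rw [Matrix.mul_assoc, Matrix.mul_apply]
      refine Finset.sum_congr rfl fun k _ => ?_
      rw [hDR k, Matrix.star_apply, hR]
      simp only [Complex.star_def, Complex.conj_ofReal]
      push_cast
      ring
    rw [this, ← Complex.ofReal_sum]
    congr 1
    rw [three_split hab]
    congr 1
    have : ∀ k ∈ (univ.erase a).erase b, Rr k i * x k * Rr k j
        = if k = i then (if k = j then x k else 0) else 0 := by
      intro k hk
      have hkb : k ≠ b := Finset.ne_of_mem_erase hk
      have hka' : k ≠ a := Finset.ne_of_mem_erase (Finset.mem_of_mem_erase hk)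
      rw [hrow k hka' hkb i, hrow k hka' hkb j]
      split_ifs with h1 h2 <;> simp_all
    rw [Finset.sum_congr rfl this]
    rw [Finset.sum_ite_eq' ((univ.erase a).erase b) i (fun k => if k = j then x k else 0)]
  have hmemE : ∀ i, i ∈ (univ.erase a).erase b ↔ (i ≠ b ∧ i ≠ a) := by
    intro i
    simp [Finset.mem_erase]
  have e1 : Rr a a = s := by rw [hRr]; simp
  have e2 : Rr a b = -s' := by rw [hRr]; simp [Ne.symm hab]
  have e3 : Rr b a = s' := by rw [hRr]; simp [Ne.symm hab]
  have e4 : Rr b b = s := by rw [hRr]; simp [Ne.symm hab]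
  have e5 : ∀ j, j ≠ a → j ≠ b → Rr a j = 0 := by
    intro j hja hjb; rw [hRr]; simp [hja, hjb]
  have e6 : ∀ j, j ≠ a → j ≠ b → Rr b j = 0 := by
    intro j hja hjb; rw [hRr]; simp [hja, hjb, Ne.symm hab]
  clear hRr hs hs' ht
  -- real-valued identities
  have hgR : ∀ i j, Rr a i * Rr a j + Rr b i * Rr b j +
      (if i ∈ (univ.erase a).erase b then (if i = j then (1:ℝ) else 0) else 0)
      = if i = j then 1 else 0 := by
    intro i j
    by_cases hia : i = a <;> by_cases hib : i = b <;> by_cases hja : j = a <;>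
      by_cases hjb : j = b <;> by_cases hij : i = j <;>
      (try simp_all [e1, e2, e3, e4, e5, e6, hmemE]) <;> (try nlinarith [hss, hss'])
  have hgA : Rr a a * x a * Rr a a + Rr b a * x b * Rr b a +
      (if a ∈ (univ.erase a).erase b then (if a = a then x a else 0) else 0) = c := by
    have h3 : a ∉ (univ.erase a).erase b := by simp [hmemE]
    rw [if_neg h3]
    rw [e1, e3]
    have h4 : s * x a * s = t * x a := by rw [← hss]; ring
    have h5 : s' * x b * s' = (1 - t) * x b := by rw [← hss']; ring
    rw [h4, h5]
    linear_combination hkey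
  have hgD : ∀ i j, i ≠ a → j ≠ a → Rr a i * x a * Rr a j + Rr b i * x b * Rr b j +
      (if i ∈ (univ.erase a).erase b then (if i = j then x i else 0) else 0)
      = (if i = j then (if i = b then x a + x b - c else x i) else 0) := by
    intro i j hia hja
    by_cases hib : i = b <;> by_cases hjb : j = b <;> by_cases hij : i = j <;>
      (try simp_all [e1, e2, e3, e4, e5, e6, hmemE]) <;> (try nlinarith [hss, hss', hkey])
  refine ⟨R, ?_, ?_, ?_⟩
  · rw [Matrix.mem_unitaryGroup_iff']
    ext i j
    rw [hSRR i j, Matrix.one_apply]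
    have h := hgR i j
    split_ifs at h ⊢ <;> exact_mod_cast h
  · rw [hSDR a a]
    exact_mod_cast hgA
  · intro i j hia hja
    rw [hSDR i j, Matrix.diagonal_apply]
    have h := hgD i j hia hja
    split_ifs at h ⊢ <;> exact_mod_cast h


lemma sum_split {M : Type*} [AddCommMonoid M] (a : α) (f : α → M) :
    ∑ k, f k = f a + ∑ k : {i : α // i ≠ a}, f ↑k := by
  rw [← Finset.add_sum_erase univ f (mem_univ a)]
  congr 1
  exact Finset.sum_subtype (univ.erase a) (by simp [Finset.mem_erase]) f

/-- extend a matrix on the subtype `{i // i ≠ a}` by the identity at `a`. -/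
def extM (a : α) (V : Matrix {i : α // i ≠ a} {i : α // i ≠ a} ℂ) :
    Matrix α α ℂ := fun i j =>
  if hi : i = a then (if j = a then 1 else 0)
  else if hj : j = a then 0 else V ⟨i, hi⟩ ⟨j, hj⟩

lemma extM_col_a (a : α) (V : Matrix {i : α // i ≠ a} {i : α // i ≠ a} ℂ) (k : α) :
    extM a V k a = if k = a then 1 else 0 := by
  by_cases h : k = a <;> simp [extM, h]

lemma extM_row_a (a : α) (V : Matrix {i : α // i ≠ a} {i : α // i ≠ a} ℂ) (k : α)
    (hk : k ≠ a) : extM a V a k = 0 := by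
  simp [extM, hk]

lemma extM_apply (a : α) (V : Matrix {i : α // i ≠ a} {i : α // i ≠ a} ℂ) (i j : α)
    (hi : i ≠ a) (hj : j ≠ a) : extM a V i j = V ⟨i, hi⟩ ⟨j, hj⟩ := by
  simp [extM, hi, hj]

lemma extM_unitary (a : α) (V : Matrix {i : α // i ≠ a} {i : α // i ≠ a} ℂ)
    (hV : V ∈ Matrix.unitaryGroup {i : α // i ≠ a} ℂ) :
    extM a V ∈ Matrix.unitaryGroup α ℂ := by
  rw [Matrix.mem_unitaryGroup_iff']
  have hV' : star V * V = 1 := Matrix.mem_unitaryGroup_iff'.1 hV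
  ext i j
  rw [Matrix.mul_apply]
  simp only [Matrix.star_apply]
  rw [sum_split a (fun k => star (extM a V k i) * extM a V k j)]
  by_cases hi : i = a <;> by_cases hj : j = a
  · rw [hi, hj]
    have h1 : ∀ k : {i : α // i ≠ a}, star (extM a V (↑k) a) * extM a V (↑k) a = 0 := by
      intro k
      rw [extM_col_a, if_neg k.2]
      simp
    rw [Finset.sum_congr rfl (fun k _ => h1 k), Finset.sum_const_zero]
    simp [extM, Matrix.one_apply]
  · rw [hi]
    have h1 : ∀ k : {i : α // i ≠ a}, star (extM a V (↑k) a) * extM a V (↑k) j = 0 := by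
      intro k
      rw [extM_col_a, if_neg k.2]
      simp
    rw [Finset.sum_congr rfl (fun k _ => h1 k), Finset.sum_const_zero]
    rw [extM_col_a, if_pos rfl, extM_row_a a V j hj]
    simp [Ne.symm (hi ▸ hj : ¬ j = a)]
  · rw [hj]
    have h1 : ∀ k : {i : α // i ≠ a}, star (extM a V (↑k) i) * extM a V (↑k) a = 0 := by
      intro k
      rw [extM_col_a, if_neg k.2]
      simp
    rw [Finset.sum_congr rfl (fun k _ => h1 k), Finset.sum_const_zero]
    rw [extM_row_a a V i hi, extM_col_a, if_pos rfl]
    simp [(hj ▸ hi : ¬ i = a)]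
  · rw [extM_row_a a V i hi]
    have h1 : ∀ k : {i : α // i ≠ a}, star (extM a V (↑k) i) * extM a V (↑k) j
        = star (V k ⟨i, hi⟩) * V k ⟨j, hj⟩ := by
      intro k
      rw [extM_apply a V _ _ k.2 hi, extM_apply a V _ _ k.2 hj]
    rw [Finset.sum_congr rfl (fun k _ => h1 k)]
    have h2 : ∑ k : {i : α // i ≠ a}, star (V k ⟨i, hi⟩) * V k ⟨j, hj⟩
        = (star V * V) ⟨i, hi⟩ ⟨j, hj⟩ := by
      rw [Matrix.mul_apply]
      exact Finset.sum_congr rfl fun k _ => by rw [Matrix.star_apply]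
    rw [star_zero, zero_mul, zero_add, h2, hV', Matrix.one_apply, Matrix.one_apply]
    simp [Subtype.ext_iff]

lemma conj_extM_a (a : α) (V : Matrix {i : α // i ≠ a} {i : α // i ≠ a} ℂ)
    (M : Matrix α α ℂ) : (star (extM a V) * M * extM a V) a a = M a a := by
  rw [Matrix.mul_apply]
  have h1 : ∀ l, (star (extM a V) * M) a l * extM a V l a
      = if l = a then (star (extM a V) * M) a l else 0 := by
    intro l
    rw [extM_col_a]
    split_ifs <;> simp
  rw [Finset.sum_congr rfl (fun l _ => h1 l), Finset.sum_ite_eq' univ a, if_pos (mem_univ a)]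
  rw [Matrix.mul_apply]
  have h2 : ∀ k, (star (extM a V)) a k * M k a = if k = a then M k a else 0 := by
    intro k
    rw [Matrix.star_apply, extM_col_a]
    split_ifs <;> simp
  rw [Finset.sum_congr rfl (fun k _ => h2 k), Finset.sum_ite_eq' univ a, if_pos (mem_univ a)]

lemma conj_extM_ne (a : α) (V : Matrix {i : α // i ≠ a} {i : α // i ≠ a} ℂ)
    (M : Matrix α α ℂ) (i : α) (hi : i ≠ a) :
    (star (extM a V) * M * extM a V) i i
      = (star V * M.submatrix ((↑·) : {k : α // k ≠ a} → α) ((↑·) : {k : α // k ≠ a} → α) * V) ⟨i, hi⟩ ⟨i, hi⟩ := by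
  have hmid : ∀ l : {k : α // k ≠ a}, (star (extM a V) * M) i ↑l
      = (star V * M.submatrix ((↑·) : {k : α // k ≠ a} → α) ((↑·) : {k : α // k ≠ a} → α)) ⟨i, hi⟩ l := by
    intro l
    rw [Matrix.mul_apply, Matrix.mul_apply,
      sum_split a (fun k => (star (extM a V)) i k * M k ↑l)]
    have h0 : (star (extM a V)) i a * M a ↑l = 0 := by
      rw [Matrix.star_apply, extM_row_a a V i hi, star_zero, zero_mul]
    rw [h0, zero_add]
    refine Finset.sum_congr rfl fun k _ => ?_
    rw [Matrix.star_apply, extM_apply a V _ _ k.2 hi, Matrix.star_apply,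
      Matrix.submatrix_apply]
  rw [Matrix.mul_apply, Matrix.mul_apply,
    sum_split a (fun l => (star (extM a V) * M) i l * extM a V l i)]
  have h0 : (star (extM a V) * M) i a * extM a V a i = 0 := by
    rw [extM_row_a a V i hi, mul_zero]
  rw [h0, zero_add]
  refine Finset.sum_congr rfl fun l _ => ?_
  rw [hmid l, extM_apply a V _ _ l.2 hi]

lemma horn_aux : ∀ (m : ℕ) (α : Type) [Fintype α] [DecidableEq α], Fintype.card α = m →
    ∀ x y : α → ℝ, maj x y → ∃ U, U ∈ Matrix.unitaryGroup α ℂ ∧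
      ∀ i, (star U * Matrix.diagonal (fun k => (x k : ℂ)) * U) i i = ((y i : ℝ) : ℂ) := by
  intro m
  induction m with
  | zero =>
    intro α _ _ hcard x y hmaj
    refine ⟨1, one_mem _, fun i => ?_⟩
    have : IsEmpty α := Fintype.card_eq_zero_iff.1 hcard
    exact this.elim i
  | succ m IH =>
    intro α _ _ hcard x y hmaj
    have hne : Nonempty α := Fintype.card_pos_iff.1 (by omega)
    obtain ⟨i₀⟩ := hne
    set β := y i₀ with hβ
    have hA : ∃ t, β ≤ x t := by
      obtain ⟨T, hTc, hT⟩ := hmaj.2 {i₀}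
      rw [Finset.card_singleton] at hTc
      obtain ⟨t, rfl⟩ := Finset.card_eq_one.1 hTc
      exact ⟨t, by simpa using hT⟩
    obtain ⟨a, haf, hamin'⟩ := Finset.exists_min_image (univ.filter (fun i => β ≤ x i)) x
      (by obtain ⟨t, ht⟩ := hA; exact ⟨t, by simp [ht]⟩)
    have haβ : β ≤ x a := (Finset.mem_filter.1 haf).2
    have hamin : ∀ i, β ≤ x i → x a ≤ x i := fun i hi => hamin' i (by simp [hi])
    have hBex : ∃ t, x t ≤ β := by
      obtain ⟨T, hTc, hT⟩ := hmaj.2 (univ.erase i₀)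
      have hcc : Tᶜ.card = 1 := by
        rw [Finset.card_compl, hTc, Finset.card_erase_of_mem (mem_univ i₀)]
        simp only [Finset.card_univ, hcard]
        omega
      obtain ⟨t, hts⟩ := Finset.card_eq_one.1 hcc
      refine ⟨t, ?_⟩
      have h1 : ∑ i ∈ univ.erase i₀, y i = ∑ i, y i - y i₀ :=
        sum_erase_eq (mem_univ i₀)
      have h2 : ∑ i ∈ T, x i = ∑ i, x i - x t := by
        have h3 := Finset.sum_add_sum_compl T x
        rw [hts, Finset.sum_singleton] at h3
        linarith
      have h4 := hmaj.1
      rw [h1, h2] at hT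
      linarith
    set e := Equiv.swap i₀ a with he
    set y' := y ∘ e with hy'
    have hmaj' : maj x y' := maj_comp_perm hmaj e
    have hy'a : y' a = β := by
      simp only [hy', Function.comp_apply, he, Equiv.swap_apply_right, hβ]
    obtain ⟨b, hbdisj, R, hRU, hRaa, hRoff⟩ :
        ∃ b, ((b ≠ a ∧ x b < β ∧ ∀ i, x i < β → x i ≤ x b)
            ∨ (b = a ∧ x a = β ∧ ∀ i, β ≤ x i)) ∧
          ∃ R, R ∈ Matrix.unitaryGroup α ℂ ∧
            (star R * Matrix.diagonal (fun k => (x k : ℂ)) * R) a a = ((β : ℝ) : ℂ) ∧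
            ∀ i j, i ≠ a → j ≠ a →
              (star R * Matrix.diagonal (fun k => (x k : ℂ)) * R) i j
                = Matrix.diagonal
                    (fun i => (((if i = b then x a + x b - β else x i) : ℝ) : ℂ)) i j := by
      by_cases hBlt : ∃ i, x i < β
      · obtain ⟨w, hw⟩ := hBlt
        obtain ⟨b, hbf, hbmax'⟩ := Finset.exists_max_image (univ.filter (fun i => x i < β)) x
          ⟨w, by simp [hw]⟩
        have hbβ : x b < β := (Finset.mem_filter.1 hbf).2
        have hba : b ≠ a := fun h => absurd (h ▸ hbβ) (not_lt.2 haβ)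
        obtain ⟨R, h1, h2, h3⟩ := rotation_lemma x a b (Ne.symm hba) β hbβ.le haβ
        exact ⟨b, Or.inl ⟨hba, hbβ, fun i hi => hbmax' i (by simp [hi])⟩, R, h1, h2, h3⟩
      · push_neg at hBlt
        have hxa : x a = β := le_antisymm
          (by obtain ⟨t, ht⟩ := hBex; exact (hamin t (hBlt t)).trans ht) haβ
        refine ⟨a, Or.inr ⟨rfl, hxa, hBlt⟩, 1, one_mem _, ?_, ?_⟩
        · simp [Matrix.diagonal_apply_eq, hxa]
        · intro i j hia hja
          simp only [star_one, one_mul, mul_one]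
          by_cases hij : i = j
          · subst hij
            rw [Matrix.diagonal_apply_eq, Matrix.diagonal_apply_eq]
            simp [hia]
          · rw [Matrix.diagonal_apply_ne _ hij, Matrix.diagonal_apply_ne _ hij]
    have hsub_card : Fintype.card {i : α // i ≠ a} = m := by
      have h1 : Fintype.card {i : α // i ≠ a} = Fintype.card α - 1 := by
        rw [← Fintype.card_subtype_eq a]
        exact Fintype.card_subtype_compl _
      omega
    set γ := x a + x b - β with hγ
    set xx : α → ℝ := fun i => if i = b then γ else x i with hxx
    set x'' : {i : α // i ≠ a} → ℝ := fun i => xx ↑i with hx''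
    set y'' : {i : α // i ≠ a} → ℝ := fun i => y' ↑i with hy''
    have hsumxx : ∑ i : {i : α // i ≠ a}, x'' i = (∑ i, x i) - β := by
      have h0 : ∑ i, xx i = xx a + ∑ i : {i : α // i ≠ a}, x'' i := sum_split a xx
      rcases hbdisj with ⟨hba, -, -⟩ | ⟨hba, hxaβ, -⟩
      · have h1 : ∑ i, xx i = γ + (∑ i, x i - x b) := by
          rw [sum_if_of_mem (mem_univ b), sum_erase_eq (mem_univ b)]
        have h2 : xx a = x a := by simp [hxx, Ne.symm hba]
        rw [h1, h2] at h0
        rw [hγ] at h0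
        linarith
      · subst hba
        have h1 : ∑ i, xx i = γ + (∑ i, x i - x b) := by
          rw [sum_if_of_mem (mem_univ b), sum_erase_eq (mem_univ b)]
        have h2 : xx b = γ := by simp [hxx]
        rw [h1, h2] at h0
        linarith [hxaβ]
    have hmaj'' : maj x'' y'' := by
      constructor
      · have h1 : ∑ i, y' i = ∑ i, y i := Equiv.sum_comp e y
        have h2 : ∑ i, y' i = y' a + ∑ i : {i : α // i ≠ a}, y'' i := sum_split a y'
        rw [hsumxx]
        have h4 := hmaj.1
        rw [hy'a] at h2
        linarith
      · intro S'
        set S := S'.map ⟨Subtype.val, Subtype.val_injective⟩ with hS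
        have haS : a ∉ S := by
          simp only [hS, Finset.mem_map, Function.Embedding.coeFn_mk]
          rintro ⟨k, -, hk⟩
          exact k.2 hk
        obtain ⟨T, haT, hTc, hT⟩ := key_reduction hmaj' a b β hy'a haβ hamin hbdisj S haS
        have hfil : T.filter (fun i => i ≠ a) = T := by
          apply Finset.filter_true_of_mem
          intro i hi h
          exact haT (h ▸ hi)
        refine ⟨T.subtype (fun i => i ≠ a), ?_, ?_⟩
        · rw [Finset.card_subtype, hfil, hTc, hS, Finset.card_map]
        · have h1 : ∑ i ∈ S', y'' i = ∑ i ∈ S, y' i := by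
            rw [hS, Finset.sum_map]
            rfl
          have h2 : ∑ i ∈ T.subtype (fun i => i ≠ a), x'' i = ∑ i ∈ T, xx i := by
            rw [hx'', Finset.sum_subtype_eq_sum_filter, hfil]
          rw [h1, h2]
          exact hT
    obtain ⟨Vm, hVmU, hVmdiag⟩ := IH {i : α // i ≠ a} hsub_card x'' y'' hmaj''
    set W := extM a Vm with hW
    set D := Matrix.diagonal (fun k : α => (x k : ℂ)) with hD
    set U₀ := R * W with hU₀
    have hU₀U : U₀ ∈ Matrix.unitaryGroup α ℂ := mul_mem hRU (extM_unitary a Vm hVmU)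
    have hkey : star U₀ * D * U₀ = star W * (star R * D * R) * W := by
      rw [hU₀, StarMul.star_mul]
      noncomm_ring
    have hdiag : ∀ i, (star U₀ * D * U₀) i i = ((y' i : ℝ) : ℂ) := by
      intro i
      rw [hkey]
      by_cases hi : i = a
      · subst hi
        rw [hW, conj_extM_a, hRaa, hy'a]
      · rw [hW, conj_extM_ne a Vm _ i hi]
        have hsub : (star R * D * R).submatrix ((↑·) : {k : α // k ≠ a} → α)
            ((↑·) : {k : α // k ≠ a} → α)
            = Matrix.diagonal (fun k : {i : α // i ≠ a} => ((x'' k : ℝ) : ℂ)) := by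
          ext k l
          rw [Matrix.submatrix_apply, hRoff (↑k) (↑l) k.2 l.2]
          by_cases hkl : k = l
          · subst hkl
            rw [Matrix.diagonal_apply_eq, Matrix.diagonal_apply_eq]
          · rw [Matrix.diagonal_apply_ne _ (fun h => hkl (Subtype.ext h)),
              Matrix.diagonal_apply_ne _ hkl]
        rw [hsub, hVmdiag ⟨i, hi⟩]
    refine ⟨U₀.submatrix id ⇑e, ?_, fun i => ?_⟩
    · have hU₀' : star U₀ * U₀ = 1 := Matrix.mem_unitaryGroup_iff'.1 hU₀U
      rw [Matrix.mem_unitaryGroup_iff']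
      ext i j
      have h1 : (star (U₀.submatrix id ⇑e) * U₀.submatrix id ⇑e) i j
          = (star U₀ * U₀) (e i) (e j) := by
        rw [Matrix.mul_apply, Matrix.mul_apply]
        refine Finset.sum_congr rfl fun k _ => ?_
        rw [Matrix.star_apply, Matrix.star_apply, Matrix.submatrix_apply,
          Matrix.submatrix_apply]
        rfl
      rw [h1, hU₀', Matrix.one_apply, Matrix.one_apply]
      simp [e.injective.eq_iff]
    · have h1 : (star (U₀.submatrix id ⇑e) * D * U₀.submatrix id ⇑e) i i
          = (star U₀ * D * U₀) (e i) (e i) := by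
        rw [Matrix.mul_assoc, Matrix.mul_apply, Matrix.mul_assoc, Matrix.mul_apply]
        refine Finset.sum_congr rfl fun k _ => ?_
        rw [Matrix.star_apply, Matrix.star_apply, Matrix.submatrix_apply,
          Matrix.mul_apply, Matrix.mul_apply]
        simp only [Matrix.submatrix_apply, id_eq]
      rw [h1, hdiag (e i)]
      have : y' (e i) = y i := by
        simp only [hy', Function.comp_apply, he, Equiv.swap_apply_self]
      rw [this]


section assembly

variable {n r : ℕ}

lemma row_abs_sum (M : Matrix (Fin n) (Fin n) ℂ) (i : Fin n) :
    (∑ j, ‖M i j‖ ^ 2) = ((M * Mᴴ) i i).re := by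
  rw [Matrix.mul_apply, Complex.re_sum]
  refine Finset.sum_congr rfl fun j _ => ?_
  rw [Matrix.conjTranspose_apply, RCLike.star_def, Complex.mul_conj, Complex.ofReal_re,
    Complex.sq_norm]

lemma col_abs_sum (M : Matrix (Fin n) (Fin n) ℂ) (i : Fin n) :
    (∑ j, ‖M j i‖ ^ 2) = ((Mᴴ * M) i i).re := by
  rw [Matrix.mul_apply, Complex.re_sum]
  refine Finset.sum_congr rfl fun j _ => ?_
  rw [Matrix.conjTranspose_apply, RCLike.star_def, mul_comm, Complex.mul_conj,
    Complex.ofReal_re, Complex.sq_norm]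

lemma negL_eq (hn : 0 < n) (V : Fin r → Matrix (Fin n) (Fin n) ℂ)
    (U : Matrix (Fin n) (Fin n) ℂ) (hU : U ∈ Matrix.unitaryGroup (Fin n) ℂ) (i : Fin n) :
    negL V U (fun _ => 1 / (n : ℝ)) i
      = ((star U * (∑ k, (V k * (V k)ᴴ - (V k)ᴴ * V k)) * U) i i).re / n := by
  have hUU : U * star U = 1 := Matrix.mem_unitaryGroup_iff.1 hU
  have hUU' : star U * U = 1 := Matrix.mem_unitaryGroup_iff'.1 hU
  have hWH : ∀ k : Fin r, (Uᴴ * V k * U)ᴴ = Uᴴ * (V k)ᴴ * U := by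
    intro k
    rw [Matrix.conjTranspose_mul, Matrix.conjTranspose_mul, Matrix.conjTranspose_conjTranspose]
    noncomm_ring
  have hWWH : ∀ k : Fin r, (Uᴴ * V k * U) * (Uᴴ * V k * U)ᴴ = star U * (V k * (V k)ᴴ) * U := by
    intro k
    rw [hWH k]
    have h1 : Uᴴ * V k * U * (Uᴴ * (V k)ᴴ * U) = Uᴴ * V k * (U * Uᴴ) * ((V k)ᴴ * U) := by
      noncomm_ring
    rw [h1]
    have h2 : U * Uᴴ = 1 := hUU
    rw [h2, Matrix.mul_one]
    noncomm_ring
  have hWHW : ∀ k : Fin r, (Uᴴ * V k * U)ᴴ * (Uᴴ * V k * U) = star U * ((V k)ᴴ * V k) * U := by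
    intro k
    rw [hWH k]
    have h1 : Uᴴ * (V k)ᴴ * U * (Uᴴ * V k * U) = Uᴴ * (V k)ᴴ * (U * Uᴴ) * (V k * U) := by
      noncomm_ring
    rw [h1]
    have h2 : U * Uᴴ = 1 := hUU
    rw [h2, Matrix.mul_one]
    noncomm_ring
  have hrow : ∑ j, Jmat V U i j = ∑ k, ((star U * (V k * (V k)ᴴ) * U) i i).re := by
    rw [show ∑ j, Jmat V U i j = ∑ k, ∑ j, ‖(Uᴴ * V k * U) i j‖ ^ 2 from
      Finset.sum_comm]
    refine Finset.sum_congr rfl fun k _ => ?_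
    rw [row_abs_sum (Uᴴ * V k * U) i, hWWH k]
  have hcol : ∑ j, Jmat V U j i = ∑ k, ((star U * ((V k)ᴴ * V k) * U) i i).re := by
    rw [show ∑ j, Jmat V U j i = ∑ k, ∑ j, ‖(Uᴴ * V k * U) j i‖ ^ 2 from
      Finset.sum_comm]
    refine Finset.sum_congr rfl fun k _ => ?_
    rw [col_abs_sum (Uᴴ * V k * U) i, hWHW k]
  have hA : ((star U * (∑ k, (V k * (V k)ᴴ - (V k)ᴴ * V k)) * U) i i).re
      = ∑ k, (((star U * (V k * (V k)ᴴ) * U) i i).re - ((star U * ((V k)ᴴ * V k) * U) i i).re) := by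
    rw [Matrix.mul_sum, Matrix.sum_mul, Matrix.sum_apply, Complex.re_sum]
    refine Finset.sum_congr rfl fun k _ => ?_
    rw [Matrix.mul_sub, Matrix.sub_mul, Matrix.sub_apply, Complex.sub_re]
  have hnegL : negL V U (fun _ => 1 / (n : ℝ)) i
      = (∑ j, Jmat V U i j) * (1 / n) - (∑ j, Jmat V U j i) * (1 / n) := by
    simp only [negL, ← Finset.sum_mul]
  rw [hnegL, hrow, hcol, hA]
  rw [Finset.sum_sub_distrib]
  field_simp

theorem main {n r : ℕ} (hn : 0 < n)
    (V : Fin r → Matrix (Fin n) (Fin n) ℂ)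
    (hherm : Matrix.IsHermitian (∑ k, (V k * (V k)ᴴ - (V k)ᴴ * V k))) :
    derv V (fun _ => 1 / n) =
      convexHull ℝ {w : Fin n → ℝ | ∃ π : Equiv.Perm (Fin n),
        w = fun i => hherm.eigenvalues (π i) / n} := by
  classical
  have hnne : (n:ℝ) ≠ 0 := Nat.cast_ne_zero.2 hn.ne'
  set A := ∑ k, (V k * (V k)ᴴ - (V k)ᴴ * V k) with hAdef
  set σ : Fin n → ℝ := hherm.eigenvalues with hσ
  set Q : Matrix (Fin n) (Fin n) ℂ := (hherm.eigenvectorUnitary : Matrix (Fin n) (Fin n) ℂ)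
    with hQ
  have hQU : Q ∈ Matrix.unitaryGroup (Fin n) ℂ := hherm.eigenvectorUnitary.2
  have hQQ : Q * star Q = 1 := Matrix.mem_unitaryGroup_iff.1 hQU
  have hspec : star Q * A * Q = Matrix.diagonal (fun i => ((σ i : ℝ) : ℂ)) := by
    have h := hherm.conjStarAlgAut_star_eigenvectorUnitary
    rw [Unitary.conjStarAlgAut_star_apply] at h
    exact h
  -- the linear map sending a matrix M to (i ↦ ∑ j M i j • σ j / n)
  set f : Matrix (Fin n) (Fin n) ℝ →ₗ[ℝ] (Fin n → ℝ) :=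
    { toFun := fun M i => ∑ j, M i j * (σ j / n),
      map_add' := fun M N => by
        funext i
        simp [Matrix.add_apply, add_mul, Finset.sum_add_distrib]
      map_smul' := fun c M => by
        funext i
        simp [Matrix.smul_apply, smul_eq_mul, Finset.mul_sum, mul_assoc] } with hf
  ext w
  constructor
  · rintro ⟨U, hUSU, rfl⟩
    have hU : U ∈ Matrix.unitaryGroup (Fin n) ℂ :=
      (Matrix.mem_specialUnitaryGroup_iff.1 hUSU).1
    set Wc := star Q * U with hWc
    have hWcU : Wc ∈ Matrix.unitaryGroup (Fin n) ℂ := mul_mem (Unitary.star_mem hQU) hU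
    have hconj : star U * A * U = star Wc * Matrix.diagonal (fun i => ((σ i : ℝ) : ℂ)) * Wc := by
      rw [hWc, StarMul.star_mul, star_star, ← hspec]
      have h1 : star U * Q * (star Q * A * Q) * (star Q * U)
          = star U * (Q * star Q) * A * (Q * star Q) * U := by noncomm_ring
      rw [h1, hQQ, Matrix.mul_one, Matrix.mul_one]
    have hdiagval : ∀ i, ((star U * A * U) i i).re
        = ∑ j, ‖Wc j i‖ ^ 2 * σ j := by
      intro i
      rw [hconj, Matrix.mul_assoc, Matrix.mul_apply, Complex.re_sum]
      refine Finset.sum_congr rfl fun j _ => ?_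
      rw [Matrix.diagonal_mul, Matrix.star_apply]
      have h2 : star (Wc j i) * ((σ j : ℂ) * Wc j i)
          = ((‖Wc j i‖ ^ 2 * σ j : ℝ) : ℂ) := by
        rw [RCLike.star_def]
        rw [show (starRingEnd ℂ) (Wc j i) * ((σ j : ℂ) * Wc j i)
            = (σ j : ℂ) * (Wc j i * (starRingEnd ℂ) (Wc j i)) from by ring, Complex.mul_conj,
          ← Complex.sq_norm]
        push_cast
        ring
      rw [h2, Complex.ofReal_re]
    set M : Matrix (Fin n) (Fin n) ℝ := fun i j => ‖Wc j i‖ ^ 2 with hM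
    have hMd : M ∈ doublyStochastic ℝ (Fin n) := by
      rw [mem_doublyStochastic_iff_sum]
      refine ⟨fun i j => sq_nonneg _, fun i => ?_, fun j => ?_⟩
      · have h1 := col_abs_sum Wc i
        have h2 : star Wc * Wc = 1 := Matrix.mem_unitaryGroup_iff'.1 hWcU
        have h3 : Wcᴴ * Wc = 1 := h2
        rw [hM]
        rw [h1, h3, Matrix.one_apply_eq, Complex.one_re]
      · have h1 := row_abs_sum Wc j
        have h2 : Wc * Wcᴴ = 1 := Matrix.mem_unitaryGroup_iff.1 hWcU
        rw [hM]
        rw [h1, h2, Matrix.one_apply_eq, Complex.one_re]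
    have hw : negL V U (fun _ => 1 / (n : ℝ)) = f M := by
      funext i
      rw [negL_eq hn V U hU i, hdiagval i, Finset.sum_div]
      simp only [hf, LinearMap.coe_mk, AddHom.coe_mk]
      refine Finset.sum_congr rfl fun j _ => ?_
      rw [hM]
      ring
    have hMd' : M ∈ convexHull ℝ {P : Matrix (Fin n) (Fin n) ℝ | ∃ π : Equiv.Perm (Fin n),
        P = π.permMatrix ℝ} := by
      have heq := doublyStochastic_eq_convexHull_permMatrix (R := ℝ) (n := Fin n)
      have : (doublyStochastic ℝ (Fin n) : Set (Matrix (Fin n) (Fin n) ℝ))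
          = convexHull ℝ {P : Matrix (Fin n) (Fin n) ℝ | ∃ π : Equiv.Perm (Fin n),
              P = π.permMatrix ℝ} := by
        rw [heq]
        congr 1
        ext P
        exact ⟨fun ⟨π, h⟩ => ⟨π, h.symm⟩, fun ⟨π, h⟩ => ⟨π, h.symm⟩⟩
      rw [← this]
      exact hMd
    rw [hw]
    have himg : f M ∈ convexHull ℝ (f '' {P : Matrix (Fin n) (Fin n) ℝ |
        ∃ π : Equiv.Perm (Fin n), P = π.permMatrix ℝ}) := by
      rw [← f.image_convexHull]
      exact Set.mem_image_of_mem f hMd'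
    refine convexHull_mono ?_ himg
    rintro v ⟨P, ⟨π, rfl⟩, rfl⟩
    refine ⟨π, ?_⟩
    funext i
    simp only [hf, LinearMap.coe_mk, AddHom.coe_mk]
    have hperm : ∀ j, (π.permMatrix ℝ) i j = if π i = j then (1:ℝ) else 0 := by
      intro j
      simp [Equiv.Perm.permMatrix, PEquiv.toMatrix_apply, Equiv.toPEquiv_apply, Option.mem_def]
    rw [show ∑ j, (π.permMatrix ℝ) i j * (σ j / n)
        = ∑ j, (if π i = j then (σ j / (n:ℝ)) else 0) from Finset.sum_congr rfl fun j _ => by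
          rw [hperm j]; split_ifs <;> simp]
    rw [Finset.sum_ite_eq univ (π i) (fun j => σ j / (n:ℝ)), if_pos (Finset.mem_univ _)]
  · intro hy
    have hmaj1 : maj (fun i => σ i / n) w := maj_of_mem_convexHull hy
    have hmaj2 : maj σ (fun i => n * w i) := by
      constructor
      · have h1 := hmaj1.1
        rw [← Finset.mul_sum, h1, Finset.mul_sum]
        refine Finset.sum_congr rfl fun i _ => ?_
        field_simp
      · intro S
        obtain ⟨T, hTc, hT⟩ := hmaj1.2 S
        refine ⟨T, hTc, ?_⟩
        have h2 : ∑ i ∈ S, n * w i = n * ∑ i ∈ S, w i := by rw [Finset.mul_sum]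
        have h3 : (n:ℝ) * ∑ i ∈ T, σ i / n = ∑ i ∈ T, σ i := by
          rw [Finset.mul_sum]
          refine Finset.sum_congr rfl fun i _ => ?_
          field_simp
        rw [h2, ← h3]
        exact mul_le_mul_of_nonneg_left hT (Nat.cast_nonneg n)
    obtain ⟨Wc, hWcU, hWcdiag⟩ :=
      horn_aux n (Fin n) (Fintype.card_fin n) σ (fun i => n * w i) hmaj2
    set U₁ := Q * Wc with hU₁
    have hU₁U : U₁ ∈ Matrix.unitaryGroup (Fin n) ℂ := mul_mem hQU hWcU
    have hdet : ‖U₁.det‖ = 1 := by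
      have h1 : U₁.det ∈ unitary ℂ := Matrix.det_of_mem_unitary hU₁U
      have h2 : U₁.det * star U₁.det = 1 := (Unitary.mem_iff.1 h1).2
      rw [RCLike.star_def, Complex.mul_conj] at h2
      have h3 : Complex.normSq U₁.det = 1 := by exact_mod_cast h2
      rw [Complex.norm_def, h3, Real.sqrt_one]
    have hdetne : U₁.det ≠ 0 := by
      intro h
      rw [h] at hdet
      simp at hdet
    obtain ⟨c, hc⟩ := IsAlgClosed.exists_pow_nat_eq (U₁.det⁻¹) hn
    have hcabs : ‖c‖ = 1 := by
      have h1 : ‖c‖ ^ n = 1 := by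
        rw [← norm_pow, hc, norm_inv, hdet]
        norm_num
      rcases lt_trichotomy ‖c‖ 1 with h | h | h
      · have := pow_lt_one₀ (norm_nonneg c) h hn.ne'
        rw [h1] at this
        exact absurd this (lt_irrefl 1)
      · exact h
      · have := one_lt_pow₀ h hn.ne'
        rw [h1] at this
        exact absurd this (lt_irrefl 1)
    have hnsq : Complex.normSq c = 1 := by
      have h1 := Complex.sq_norm c
      rw [hcabs] at h1
      simpa using h1.symm
    have hstarc : star c * c = 1 := by
      rw [RCLike.star_def, mul_comm, Complex.mul_conj, hnsq]
      norm_num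
    set U' := c • U₁ with hU'
    have hU'U : U' ∈ Matrix.unitaryGroup (Fin n) ℂ := by
      rw [Matrix.mem_unitaryGroup_iff']
      rw [hU', star_smul, Matrix.smul_mul, Matrix.mul_smul, smul_smul, hstarc,
        Matrix.mem_unitaryGroup_iff'.1 hU₁U, one_smul]
    have hU'SU : U' ∈ Matrix.specialUnitaryGroup (Fin n) ℂ := by
      rw [Matrix.mem_specialUnitaryGroup_iff]
      refine ⟨hU'U, ?_⟩
      rw [hU', Matrix.det_smul, Fintype.card_fin, hc]
      exact inv_mul_cancel₀ hdetne
    refine ⟨U', hU'SU, ?_⟩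
    have hJ : Jmat V U' = Jmat V U₁ := by
      funext i j
      simp only [Jmat]
      refine Finset.sum_congr rfl fun k _ => ?_
      congr 1
      have h1 : U'ᴴ * V k * U' = (star c * c) • (U₁ᴴ * V k * U₁) := by
        rw [hU', Matrix.conjTranspose_smul, Matrix.smul_mul, Matrix.smul_mul, Matrix.mul_smul,
          smul_smul]
      rw [h1, hstarc, one_smul]
    have hnegL' : negL V U' (fun _ => 1 / (n:ℝ)) = negL V U₁ (fun _ => 1 / (n:ℝ)) := by
      funext i
      simp only [negL, hJ]
    rw [hnegL']
    have hconj : star U₁ * A * U₁ = star Wc * Matrix.diagonal (fun k => ((σ k : ℝ) : ℂ)) * Wc := by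
      rw [hU₁, StarMul.star_mul, ← hspec]
      noncomm_ring
    funext i
    rw [negL_eq hn V U₁ hU₁U i]
    rw [show star U₁ * (∑ k, (V k * (V k)ᴴ - (V k)ᴴ * V k)) * U₁
        = star Wc * Matrix.diagonal (fun k => ((σ k : ℝ) : ℂ)) * Wc from hconj]
    rw [hWcdiag i, Complex.ofReal_re]
    field_simp

end assembly

end SHaux

/-- At the maximally mixed state, the achievable derivatives form the
convex polytope whose vertices are the permutations of `(1/n)·spec(Σ_k [V_k, V_k*])`. -/
theorem derv_at_maximally_mixed {n r : ℕ} (hn : 0 < n)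
    (V : Fin r → Matrix (Fin n) (Fin n) ℂ)
    (hherm : Matrix.IsHermitian (∑ k, (V k * (V k)ᴴ - (V k)ᴴ * V k))) :
    derv V (fun _ => 1 / n) =
      convexHull ℝ {w : Fin n → ℝ | ∃ π : Equiv.Perm (Fin n),
        w = fun i => hherm.eigenvalues (π i) / n} :=
  SHaux.main hn V hherm
end

section
/- Let V_1,…,V_r ∈ M_n(ℂ), let U be unitary, and set J := J(U) and let 𝟙 ∈ ℝ^n denote the all-ones vector. Then: J_{ij} ≥ 0 for all i,j; J·𝟙 ≼ spec(Σ_{k=1}^r V_kV_k*); Jᵀ·𝟙 ≼ spec(Σ_{k=1}^r V_k*V_k); (J + Jᵀ)·𝟙 ≼ spec(Σ_{k=1}^r (V_kV_k* + V_k*V_k)); and (J − Jᵀ)·𝟙 ≼ spec(Σ_{k=1}^r (V_kV_k* − V_k*V_k)), where spec(A) denotes the vector of eigenvalues (with multiplicity) of the Hermitian matrix A. -/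
open Matrix MeasureTheory
open scoped ComplexOrder

/-- Sum of the `k` largest entries of a vector, as a supremum over all
sums of `k` distinct entries. -/
noncomputable def sumLargest {n : ℕ} (x : Fin n → ℝ) (k : ℕ) : ℝ :=
  sSup {r | ∃ s : Finset (Fin n), s.card = k ∧ r = ∑ i ∈ s, x i}

/-- `Majorizes y x` means that `x ≼ y`, i.e. `y` majorizes `x`: the total sums agree and
for each `k` the sum of the `k` largest entries of `x` is at most that of `y`. -/
def Majorizes {n : ℕ} (y x : Fin n → ℝ) : Prop :=
  (∑ i, x i = ∑ i, y i) ∧ ∀ k : ℕ, 1 ≤ k → k ≤ n → sumLargest x k ≤ sumLargest y k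

lemma aux_bddAbove {n : ℕ} (x : Fin n → ℝ) (k : ℕ) :
    BddAbove {r | ∃ s : Finset (Fin n), s.card = k ∧ r = ∑ i ∈ s, x i} := by
  apply Set.Finite.bddAbove
  apply Set.Finite.subset (Set.finite_range (fun s : Finset (Fin n) => ∑ i ∈ s, x i))
  rintro r ⟨s, _, rfl⟩; exact ⟨s, rfl⟩

lemma aux_maj_of_dstoch {n : ℕ} (S : Matrix (Fin n) (Fin n) ℝ)
    (h0 : ∀ i j, 0 ≤ S i j) (hrow : ∀ i, ∑ j, S i j = 1) (hcol : ∀ j, ∑ i, S i j = 1)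
    (lam x : Fin n → ℝ) (hx : ∀ i, x i = ∑ j, S i j * lam j) :
    Majorizes lam x := by
  constructor
  · calc ∑ i, x i = ∑ i, ∑ j, S i j * lam j := by simp [hx]
      _ = ∑ j, (∑ i, S i j) * lam j := by rw [Finset.sum_comm]; simp [Finset.sum_mul]
      _ = ∑ i, lam i := by simp [hcol]
  · intro k hk1 hkn
    -- choose t maximizing the lam-sum among card-k sets
    have hTne : ((Finset.univ : Finset (Fin n)).powersetCard k).Nonempty :=
      Finset.powersetCard_nonempty.2 (by simpa using hkn)
    obtain ⟨t, htmem, htmax⟩ :=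
      Finset.exists_max_image _ (fun s : Finset (Fin n) => ∑ i ∈ s, lam i) hTne
    have htcard : t.card = k := (Finset.mem_powersetCard.1 htmem).2
    have htne : t.Nonempty := Finset.card_pos.1 (by omega)
    obtain ⟨i0, hi0t, hi0min⟩ := Finset.exists_min_image t lam htne
    set m := lam i0 with hm
    have houtside : ∀ j ∉ t, lam j ≤ m := by
      intro j hj
      by_contra hlt
      push_neg at hlt
      set t' := insert j (t.erase i0) with ht'
      have hjE : j ∉ t.erase i0 := fun h => hj (Finset.mem_of_mem_erase h)
      have hcard' : t'.card = k := by
        rw [ht', Finset.card_insert_of_notMem hjE, Finset.card_erase_of_mem hi0t, htcard]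
        omega
      have hsum' : ∑ i ∈ t', lam i = lam j + (∑ i ∈ t, lam i - lam i0) := by
        rw [ht', Finset.sum_insert hjE]
        have := Finset.add_sum_erase t lam hi0t
        linarith
      have hle := htmax t' (Finset.mem_powersetCard.2 ⟨Finset.subset_univ _, hcard'⟩)
      rw [hsum'] at hle
      linarith
    -- bound any card-k sum of x
    have key : ∀ s : Finset (Fin n), s.card = k → ∑ i ∈ s, x i ≤ ∑ i ∈ t, lam i := by
      intro s hs
      set c : Fin n → ℝ := fun j => ∑ i ∈ s, S i j with hc
      have hc0 : ∀ j, 0 ≤ c j := fun j => Finset.sum_nonneg fun i _ => h0 i j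
      have hc1 : ∀ j, c j ≤ 1 := by
        intro j
        calc c j ≤ ∑ i, S i j :=
              Finset.sum_le_sum_of_subset_of_nonneg (Finset.subset_univ s)
                (fun i _ _ => h0 i j)
          _ = 1 := hcol j
      have hcsum : ∑ j, c j = (k : ℝ) := by
        rw [hc]
        rw [Finset.sum_comm]
        simp [hrow, hs]
      have hxs : ∑ i ∈ s, x i = ∑ j, c j * lam j := by
        simp only [hx]
        rw [Finset.sum_comm]
        simp [hc, Finset.sum_mul]
      rw [hxs]
      have hsplit : ∑ j, c j * lam j = ∑ j ∈ t, c j * lam j + ∑ j ∈ tᶜ, c j * lam j :=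
        (Finset.sum_add_sum_compl t _).symm
      have hA : ∑ j ∈ t, c j * lam j ≤ ∑ j ∈ t, (lam j + (c j - 1) * m) := by
        apply Finset.sum_le_sum
        intro j hj
        have h1 : m ≤ lam j := hi0min j hj
        have h2 : c j ≤ 1 := hc1 j
        nlinarith
      have hB : ∑ j ∈ tᶜ, c j * lam j ≤ ∑ j ∈ tᶜ, c j * m := by
        apply Finset.sum_le_sum
        intro j hj
        exact mul_le_mul_of_nonneg_left (houtside j (Finset.mem_compl.1 hj)) (hc0 j)
      have e1 : ∑ j ∈ t, (lam j + (c j - 1) * m)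
          = ∑ j ∈ t, lam j + (∑ j ∈ t, c j) * m - k * m := by
        rw [Finset.sum_add_distrib]
        have : ∑ j ∈ t, (c j - 1) * m = (∑ j ∈ t, c j) * m - k * m := by
          simp only [sub_mul, one_mul, Finset.sum_sub_distrib, Finset.sum_mul,
            Finset.sum_const, htcard, nsmul_eq_mul]
        linarith
      have e2 : ∑ j ∈ tᶜ, c j * m = (∑ j ∈ tᶜ, c j) * m := by rw [Finset.sum_mul]
      have e3 : ∑ j ∈ t, c j + ∑ j ∈ tᶜ, c j = (k : ℝ) := by
        rw [Finset.sum_add_sum_compl t c]; exact hcsum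
      have : ((∑ j ∈ t, c j) + (∑ j ∈ tᶜ, c j)) * m = k * m := by rw [e3]
      rw [add_mul] at this
      linarith
    -- conclude
    have hne2 : {r | ∃ s : Finset (Fin n), s.card = k ∧ r = ∑ i ∈ s, x i}.Nonempty := by
      obtain ⟨s, _, hs⟩ := Finset.exists_subset_card_eq (s := (Finset.univ : Finset (Fin n))) (n := k)
        (by simpa using hkn)
      exact ⟨∑ i ∈ s, x i, s, hs, rfl⟩
    have h1 : sumLargest x k ≤ ∑ i ∈ t, lam i := by
      apply csSup_le hne2
      rintro r ⟨s, hs, rfl⟩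
      exact key s hs
    have h2 : ∑ i ∈ t, lam i ≤ sumLargest lam k :=
      le_csSup (aux_bddAbove lam k) ⟨t, htcard, rfl⟩
    linarith
section
variable {n : ℕ}

lemma aux_conj_entry_re (R : Matrix (Fin n) (Fin n) ℂ) (lam : Fin n → ℝ) (i : Fin n) :
    ((R * diagonal (Complex.ofReal ∘ lam) * Rᴴ) i i).re
      = ∑ j, Complex.normSq (R i j) * lam j := by
  rw [Matrix.mul_apply]
  simp only [Matrix.mul_diagonal, Matrix.conjTranspose_apply, Function.comp]
  rw [Complex.re_sum]
  apply Finset.sum_congr rfl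
  intro j _
  rw [show R i j * (lam j : ℂ) * star (R i j) = (R i j * star (R i j)) * (lam j : ℂ) by ring]
  rw [show star (R i j) = (starRingEnd ℂ) (R i j) from rfl, Complex.mul_conj,
    ← Complex.ofReal_mul]
  simp

lemma aux_unitary_rowsum {R : Matrix (Fin n) (Fin n) ℂ}
    (hR : R ∈ Matrix.unitaryGroup (Fin n) ℂ) (i : Fin n) :
    ∑ j, Complex.normSq (R i j) = 1 := by
  have h : (R * Rᴴ) i i = 1 := by
    rw [← Matrix.star_eq_conjTranspose, Matrix.mem_unitaryGroup_iff.mp hR]; simp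
  rw [Matrix.mul_apply] at h
  simp only [Matrix.conjTranspose_apply] at h
  have := congrArg Complex.re h
  rw [Complex.re_sum] at this
  have e : ∀ z : ℂ, (z * star z).re = Complex.normSq z := by
    intro z
    rw [show star z = (starRingEnd ℂ) z from rfl, Complex.mul_conj]; simp
  simpa only [e, Complex.one_re] using this

lemma aux_unitary_colsum {R : Matrix (Fin n) (Fin n) ℂ}
    (hR : R ∈ Matrix.unitaryGroup (Fin n) ℂ) (j : Fin n) :
    ∑ i, Complex.normSq (R i j) = 1 := by
  have h : (Rᴴ * R) j j = 1 := by
    rw [← Matrix.star_eq_conjTranspose, Matrix.mem_unitaryGroup_iff'.mp hR]; simp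
  rw [Matrix.mul_apply] at h
  simp only [Matrix.conjTranspose_apply] at h
  have := congrArg Complex.re h
  rw [Complex.re_sum] at this
  have e : ∀ z : ℂ, (star z * z).re = Complex.normSq z := by
    intro z
    rw [mul_comm, show star z = (starRingEnd ℂ) z from rfl, Complex.mul_conj]; simp
  simpa only [e, Complex.one_re] using this
end


section
variable {n : ℕ}

lemma aux_conj_mul {U : Matrix (Fin n) (Fin n) ℂ} (hUU : U * Uᴴ = 1)
    (B C : Matrix (Fin n) (Fin n) ℂ) :
    Uᴴ * (B * C) * U = (Uᴴ * B * U) * (Uᴴ * C * U) := by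
  calc Uᴴ * (B * C) * U = Uᴴ * B * (U * Uᴴ) * C * U := by rw [hUU]; noncomm_ring
    _ = (Uᴴ * B * U) * (Uᴴ * C * U) := by noncomm_ring

lemma aux_WWH_entry (W : Matrix (Fin n) (Fin n) ℂ) (i : Fin n) :
    (W * Wᴴ) i i = ((∑ j, ‖W i j‖ ^ 2 : ℝ) : ℂ) := by
  rw [Matrix.mul_apply]
  push_cast
  apply Finset.sum_congr rfl
  intro j _
  rw [Matrix.conjTranspose_apply, show star (W i j) = (starRingEnd ℂ) (W i j) from rfl,
    Complex.mul_conj]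
  norm_cast
  exact (Complex.sq_norm _).symm

lemma aux_WHW_entry (W : Matrix (Fin n) (Fin n) ℂ) (i : Fin n) :
    (Wᴴ * W) i i = ((∑ j, ‖W j i‖ ^ 2 : ℝ) : ℂ) := by
  rw [Matrix.mul_apply]
  push_cast
  apply Finset.sum_congr rfl
  intro j _
  rw [Matrix.conjTranspose_apply, mul_comm,
    show star (W j i) = (starRingEnd ℂ) (W j i) from rfl, Complex.mul_conj]
  norm_cast
  exact (Complex.sq_norm _).symm

variable {r : ℕ} (V : Fin r → Matrix (Fin n) (Fin n) ℂ) {U : Matrix (Fin n) (Fin n) ℂ}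

lemma aux_row_entry (hUU : U * Uᴴ = 1) (i : Fin n) :
    (Uᴴ * (∑ k, V k * (V k)ᴴ) * U) i i = ((∑ j, Jmat V U i j : ℝ) : ℂ) := by
  have h1 : Uᴴ * (∑ k, V k * (V k)ᴴ) * U
      = ∑ k, (Uᴴ * V k * U) * ((Uᴴ * V k * U))ᴴ := by
    rw [Finset.mul_sum, Finset.sum_mul]
    apply Finset.sum_congr rfl
    intro k _
    rw [aux_conj_mul hUU]
    simp [conjTranspose_mul, mul_assoc]
  rw [h1]
  rw [Matrix.sum_apply]
  simp only [aux_WWH_entry]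
  rw [← Complex.ofReal_sum]
  rw [show ∀ i' : Fin n, (∑ j, Jmat V U i' j) = ∑ k, ∑ j, ‖(Uᴴ * V k * U) i' j‖ ^ 2
    from fun i' => Finset.sum_comm, ]

lemma aux_col_entry (hUU : U * Uᴴ = 1) (i : Fin n) :
    (Uᴴ * (∑ k, (V k)ᴴ * V k) * U) i i = ((∑ j, Jmat V U j i : ℝ) : ℂ) := by
  have h1 : Uᴴ * (∑ k, (V k)ᴴ * V k) * U
      = ∑ k, ((Uᴴ * V k * U))ᴴ * (Uᴴ * V k * U) := by
    rw [Finset.mul_sum, Finset.sum_mul]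
    apply Finset.sum_congr rfl
    intro k _
    rw [aux_conj_mul hUU]
    simp [conjTranspose_mul, mul_assoc]
  rw [h1]
  rw [Matrix.sum_apply]
  simp only [aux_WHW_entry]
  rw [← Complex.ofReal_sum]
  rw [show (∑ j, Jmat V U j i) = ∑ k, ∑ j, ‖(Uᴴ * V k * U) j i‖ ^ 2
    from Finset.sum_comm]

end

section
variable {n : ℕ}

lemma aux_diag_conj_maj {A : Matrix (Fin n) (Fin n) ℂ} (hA : A.IsHermitian)
    {P : Matrix (Fin n) (Fin n) ℂ} (hP : P ∈ Matrix.unitaryGroup (Fin n) ℂ)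
    (x : Fin n → ℝ) (hx : ∀ i, (x i : ℂ) = (Pᴴ * A * P) i i) :
    Majorizes hA.eigenvalues x := by
  set Q : Matrix (Fin n) (Fin n) ℂ := (hA.eigenvectorUnitary : Matrix (Fin n) (Fin n) ℂ)
    with hQdef
  have hQ : Q ∈ Matrix.unitaryGroup (Fin n) ℂ := hA.eigenvectorUnitary.2
  have hPH : Pᴴ ∈ Matrix.unitaryGroup (Fin n) ℂ := by
    rw [← Matrix.star_eq_conjTranspose]; exact Unitary.star_mem hP
  set R := Pᴴ * Q with hRdef
  have hR : R ∈ Matrix.unitaryGroup (Fin n) ℂ := mul_mem hPH hQ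
  have hPAP : Pᴴ * A * P = R * diagonal (Complex.ofReal ∘ hA.eigenvalues) * Rᴴ := by
    conv_lhs => rw [hA.spectral_theorem, Unitary.conjStarAlgAut_apply]
    rw [hRdef, Matrix.star_eq_conjTranspose]
    simp only [conjTranspose_mul, conjTranspose_conjTranspose]
    noncomm_ring
  apply aux_maj_of_dstoch (fun i j => Complex.normSq (R i j))
    (fun i j => Complex.normSq_nonneg _) (aux_unitary_rowsum hR) (aux_unitary_colsum hR)
  intro i
  have h1 : x i = ((Pᴴ * A * P) i i).re := by rw [← hx]; simp
  rw [h1, hPAP, aux_conj_entry_re]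
end

/-- Majorization bounds on the row/column sums of `J(U)`:
`J𝟙 ≼ spec(ΣV_kV_k*)`, `Jᵀ𝟙 ≼ spec(ΣV_k*V_k)`, `(J+Jᵀ)𝟙 ≼ spec(Σ{V_k,V_k*})` and
`(J−Jᵀ)𝟙 ≼ spec(Σ[V_k,V_k*])`, together with entrywise nonnegativity. -/
theorem J_majorization_bounds {n r : ℕ} (V : Fin r → Matrix (Fin n) (Fin n) ℂ)
    (U : Matrix (Fin n) (Fin n) ℂ) (hU : U ∈ Matrix.unitaryGroup (Fin n) ℂ)
    (h1 : Matrix.IsHermitian (∑ k, V k * (V k)ᴴ))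
    (h2 : Matrix.IsHermitian (∑ k, (V k)ᴴ * V k))
    (h3 : Matrix.IsHermitian (∑ k, (V k * (V k)ᴴ + (V k)ᴴ * V k)))
    (h4 : Matrix.IsHermitian (∑ k, (V k * (V k)ᴴ - (V k)ᴴ * V k))) :
    (∀ i j, 0 ≤ Jmat V U i j) ∧
    Majorizes h1.eigenvalues (fun i => ∑ j, Jmat V U i j) ∧
    Majorizes h2.eigenvalues (fun i => ∑ j, Jmat V U j i) ∧
    Majorizes h3.eigenvalues (fun i => ∑ j, (Jmat V U i j + Jmat V U j i)) ∧
    Majorizes h4.eigenvalues (fun i => ∑ j, (Jmat V U i j - Jmat V U j i)) := by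
  have hUU : U * Uᴴ = 1 := by
    rw [← Matrix.star_eq_conjTranspose]; exact Matrix.mem_unitaryGroup_iff.mp hU
  refine ⟨fun i j => Finset.sum_nonneg fun k _ => by positivity, ?_, ?_, ?_, ?_⟩
  · exact aux_diag_conj_maj h1 hU _ (fun i => (aux_row_entry V hUU i).symm)
  · exact aux_diag_conj_maj h2 hU _ (fun i => (aux_col_entry V hUU i).symm)
  · apply aux_diag_conj_maj h3 hU
    intro i
    have e3 : (∑ k, (V k * (V k)ᴴ + (V k)ᴴ * V k))
        = (∑ k, V k * (V k)ᴴ) + ∑ k, (V k)ᴴ * V k := Finset.sum_add_distrib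
    rw [e3, Finset.sum_add_distrib, Matrix.mul_add, Matrix.add_mul, Matrix.add_apply,
      aux_row_entry V hUU, aux_col_entry V hUU]
    push_cast
    ring
  · apply aux_diag_conj_maj h4 hU
    intro i
    have e4 : (∑ k, (V k * (V k)ᴴ - (V k)ᴴ * V k))
        = (∑ k, V k * (V k)ᴴ) - ∑ k, (V k)ᴴ * V k := Finset.sum_sub_distrib _ _
    rw [e4, Finset.sum_sub_distrib, Matrix.mul_sub, Matrix.sub_mul, Matrix.sub_apply,
      aux_row_entry V hUU, aux_col_entry V hUU]
    push_cast
    ring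
end

section
/- Consider the spin-spin system, i.e. n = 4 with the single Lindblad term V = E_{13} + E_{24} ∈ M_4(ℂ), and for a 4×4 permutation matrix P define J(P)_{ij} = |(PᵀVP)_{ij}|². Then conv{ J(P) : P a 4×4 permutation matrix } = { J ∈ M_4(ℝ) : J_{ij} ≥ 0 for all i,j; J_{ii} = 0 for all i; and Σ_{j=1}^4 (J_{ij} + J_{ji}) = 1 for all i }. -/
open Matrix MeasureTheory
open scoped ComplexOrder

/-- The spin-spin system Lindblad term `V = σ₋ ⊗ 𝟙 = E₁₃ + E₂₄ ∈ M₄(ℂ)`. -/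
noncomputable def spinSpinV : Matrix (Fin 4) (Fin 4) ℂ :=
  Matrix.single 0 2 1 + Matrix.single 1 3 1


theorem conj_perm_aux (π : Equiv.Perm (Fin 4)) :
    (π.permMatrix ℂ)ᴴ * spinSpinV * π.permMatrix ℂ = spinSpinV.submatrix π.symm π.symm := by
  have h1 : (π.permMatrix ℂ)ᴴ = (π⁻¹).permMatrix ℂ := by
    ext i j
    simp only [Equiv.Perm.permMatrix, PEquiv.toMatrix_apply, Equiv.toPEquiv_apply,
      conjTranspose_apply, Option.mem_def, Option.some.injEq]
    by_cases h : π j = i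
    · rw [if_pos h, if_pos (by rw [← h]; exact π.symm_apply_apply j), star_one]
    · rw [if_neg h, if_neg (fun hh => h (by rw [← hh]; exact π.apply_symm_apply i)), star_zero]
  rw [h1]
  show (π⁻¹).toPEquiv.toMatrix * spinSpinV * π.toPEquiv.toMatrix = _
  rw [PEquiv.toMatrix_toPEquiv_mul, PEquiv.mul_toMatrix_toPEquiv]
  ext i j
  simp [Equiv.Perm.inv_def]

theorem jmat_perm (π : Equiv.Perm (Fin 4)) (i j : Fin 4) :
    Jmat (fun _ : Fin 1 => spinSpinV) (π.permMatrix ℂ) i j =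
      (if i = π 0 ∧ j = π 2 then 1 else 0) + (if i = π 1 ∧ j = π 3 then 1 else 0) := by
  have h1 : (0 = π.symm i) ↔ i = π 0 := by rw [eq_comm, Equiv.symm_apply_eq]
  have h2 : (2 = π.symm j) ↔ j = π 2 := by rw [eq_comm, Equiv.symm_apply_eq]
  have h3 : (1 = π.symm i) ↔ i = π 1 := by rw [eq_comm, Equiv.symm_apply_eq]
  have h4 : (3 = π.symm j) ↔ j = π 3 := by rw [eq_comm, Equiv.symm_apply_eq]
  rw [Jmat, Fin.sum_univ_one, conj_perm_aux, submatrix_apply, spinSpinV]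
  simp only [Matrix.add_apply, Matrix.single, Matrix.of_apply, h1, h2, h3, h4]
  by_cases c1 : i = π 0 ∧ j = π 2 <;> by_cases c2 : i = π 1 ∧ j = π 3
  · exact absurd (π.injective (c1.1.symm.trans c2.1)) (by decide)
  all_goals simp [c1, c2]

theorem vtx_mem_aux (π : Equiv.Perm (Fin 4)) :
    (∀ i j, 0 ≤ Jmat (fun _ : Fin 1 => spinSpinV) (π.permMatrix ℂ) i j) ∧
    (∀ i, Jmat (fun _ : Fin 1 => spinSpinV) (π.permMatrix ℂ) i i = 0) ∧
    ∀ i, ∑ j, (Jmat (fun _ : Fin 1 => spinSpinV) (π.permMatrix ℂ) i j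
      + Jmat (fun _ : Fin 1 => spinSpinV) (π.permMatrix ℂ) j i) = 1 := by
  refine ⟨fun i j => ?_, fun i => ?_, fun i => ?_⟩
  · rw [jmat_perm]; positivity
  · rw [jmat_perm]
    have c1 : ¬ (i = π 0 ∧ i = π 2) := fun h =>
      absurd (π.injective (h.1.symm.trans h.2)) (by decide)
    have c2 : ¬ (i = π 1 ∧ i = π 3) := fun h =>
      absurd (π.injective (h.1.symm.trans h.2)) (by decide)
    simp [c1, c2]
  · obtain ⟨a, rfl⟩ : ∃ a, i = π a := ⟨π.symm i, (π.apply_symm_apply i).symm⟩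
    simp only [jmat_perm]
    rw [← Equiv.sum_comp π (fun j => _)]
    simp only [Equiv.apply_eq_iff_eq]
    fin_cases a <;> simp [Fin.sum_univ_four]

lemma Laux (s a b c d : ℝ) (hs : s = a + b) (h2 : s = c + d)
    (ha : 0 ≤ a) (hb : 0 ≤ b) :
    (if s = 0 then (0:ℝ) else a*c/s) + (if s = 0 then 0 else a*d/s) = a := by
  subst hs
  rcases eq_or_ne (a + b) 0 with h | h
  · simp only [if_pos h]; have : a = 0 := by linarith
    linarith
  · simp only [if_neg h]; rw [← add_div, div_eq_iff h]
    linear_combination -a * h2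

lemma Laux2 (s a b c d : ℝ) (hs : s = a + b) (h2 : s = c + d)
    (hc : 0 ≤ c) (hd : 0 ≤ d) :
    (if s = 0 then (0:ℝ) else a*c/s) + (if s = 0 then 0 else b*c/s) = c := by
  subst hs
  rcases eq_or_ne (a + b) 0 with h | h
  · simp only [if_pos h]; have : c = 0 := by linarith
    linarith
  · simp only [if_neg h]; rw [← add_div, div_eq_iff h]
    ring

lemma Ltot (s a b c d : ℝ) (hs : s = a + b) (h2 : s = c + d) :
    ((if s = 0 then (0:ℝ) else a*c/s) + (if s = 0 then 0 else a*d/s))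
      + ((if s = 0 then 0 else b*c/s) + (if s = 0 then 0 else b*d/s)) = s := by
  subst hs
  rcases eq_or_ne (a + b) 0 with h | h
  · simp [h]
  · simp only [if_neg h]; rw [← add_div, ← add_div, ← add_div, div_eq_iff h]
    linear_combination -(a+b) * h2

def pA1 : Equiv.Perm (Fin 4) := ⟨![0,2,1,3], ![0,2,1,3], by decide, by decide⟩
def pA2 : Equiv.Perm (Fin 4) := ⟨![0,3,1,2], ![0,2,3,1], by decide, by decide⟩
def pA3 : Equiv.Perm (Fin 4) := ⟨![1,2,0,3], ![2,0,1,3], by decide, by decide⟩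
def pA4 : Equiv.Perm (Fin 4) := ⟨![1,3,0,2], ![2,0,3,1], by decide, by decide⟩
def pB1 : Equiv.Perm (Fin 4) := ⟨![0,1,2,3], ![0,1,2,3], by decide, by decide⟩
def pB2 : Equiv.Perm (Fin 4) := ⟨![0,3,2,1], ![0,3,2,1], by decide, by decide⟩
def pB3 : Equiv.Perm (Fin 4) := ⟨![2,1,0,3], ![2,1,0,3], by decide, by decide⟩
def pB4 : Equiv.Perm (Fin 4) := ⟨![2,3,0,1], ![2,3,0,1], by decide, by decide⟩
def pC1 : Equiv.Perm (Fin 4) := ⟨![0,1,3,2], ![0,1,3,2], by decide, by decide⟩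
def pC2 : Equiv.Perm (Fin 4) := ⟨![0,2,3,1], ![0,3,1,2], by decide, by decide⟩
def pC3 : Equiv.Perm (Fin 4) := ⟨![3,1,0,2], ![2,1,3,0], by decide, by decide⟩
def pC4 : Equiv.Perm (Fin 4) := ⟨![3,2,0,1], ![2,3,1,0], by decide, by decide⟩

def pvec : Fin 12 → Equiv.Perm (Fin 4) :=
  ![pA1, pA2, pA3, pA4, pB1, pB2, pB3, pB4, pC1, pC2, pC3, pC4]

set_option maxHeartbeats 2000000 in
theorem spin_spin_superset (J : Matrix (Fin 4) (Fin 4) ℝ) (h0 : ∀ i j, 0 ≤ J i j)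
    (hd : ∀ i, J i i = 0) (hs : ∀ i, ∑ j, (J i j + J j i) = 1) :
    J ∈ convexHull ℝ {J : Matrix (Fin 4) (Fin 4) ℝ | ∃ π : Equiv.Perm (Fin 4),
        J = Jmat (fun _ : Fin 1 => spinSpinV) (π.permMatrix ℂ)} := by
  have e0 := hs 0; have e1 := hs 1; have e2 := hs 2; have e3 := hs 3
  simp only [Fin.sum_univ_four, hd] at e0 e1 e2 e3
  have h1 : J 0 1 + J 1 0 = J 2 3 + J 3 2 := by linarith
  have h2 : J 0 2 + J 2 0 = J 1 3 + J 3 1 := by linarith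
  have h3 : J 0 3 + J 3 0 = J 1 2 + J 2 1 := by linarith
  have htot : (J 0 1 + J 1 0) + (J 0 2 + J 2 0) + (J 0 3 + J 3 0) = 1 := by linarith
  refine mem_convexHull_of_exists_fintype (ι := Fin 12)
    ![ (if J 0 1 + J 1 0 = 0 then (0:ℝ) else J 0 1 * J 2 3 / (J 0 1 + J 1 0)),
       (if J 0 1 + J 1 0 = 0 then (0:ℝ) else J 0 1 * J 3 2 / (J 0 1 + J 1 0)),
       (if J 0 1 + J 1 0 = 0 then (0:ℝ) else J 1 0 * J 2 3 / (J 0 1 + J 1 0)),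
       (if J 0 1 + J 1 0 = 0 then (0:ℝ) else J 1 0 * J 3 2 / (J 0 1 + J 1 0)),
       (if J 0 2 + J 2 0 = 0 then (0:ℝ) else J 0 2 * J 1 3 / (J 0 2 + J 2 0)),
       (if J 0 2 + J 2 0 = 0 then (0:ℝ) else J 0 2 * J 3 1 / (J 0 2 + J 2 0)),
       (if J 0 2 + J 2 0 = 0 then (0:ℝ) else J 2 0 * J 1 3 / (J 0 2 + J 2 0)),
       (if J 0 2 + J 2 0 = 0 then (0:ℝ) else J 2 0 * J 3 1 / (J 0 2 + J 2 0)),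
       (if J 0 3 + J 3 0 = 0 then (0:ℝ) else J 0 3 * J 1 2 / (J 0 3 + J 3 0)),
       (if J 0 3 + J 3 0 = 0 then (0:ℝ) else J 0 3 * J 2 1 / (J 0 3 + J 3 0)),
       (if J 0 3 + J 3 0 = 0 then (0:ℝ) else J 3 0 * J 1 2 / (J 0 3 + J 3 0)),
       (if J 0 3 + J 3 0 = 0 then (0:ℝ) else J 3 0 * J 2 1 / (J 0 3 + J 3 0))]
    (fun k => Jmat (fun _ : Fin 1 => spinSpinV) ((pvec k).permMatrix ℂ))
    ?_ ?_ (fun k => ⟨pvec k, rfl⟩) ?_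
  · intro k
    fin_cases k <;>
      simp only [Matrix.cons_val_zero, Matrix.cons_val_one, Matrix.head_cons,
        Matrix.cons_val_succ] <;>
      split_ifs <;>
      first
        | exact le_refl 0
        | exact div_nonneg (mul_nonneg (h0 _ _) (h0 _ _)) (add_nonneg (h0 _ _) (h0 _ _))
  · have tA := Ltot (J 0 1 + J 1 0) (J 0 1) (J 1 0) (J 2 3) (J 3 2) rfl h1
    have tB := Ltot (J 0 2 + J 2 0) (J 0 2) (J 2 0) (J 1 3) (J 3 1) rfl h2
    have tC := Ltot (J 0 3 + J 3 0) (J 0 3) (J 3 0) (J 1 2) (J 2 1) rfl h3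
    simp only [Fin.sum_univ_succ, Fin.sum_univ_zero, Matrix.cons_val_zero,
      Matrix.cons_val_one, Matrix.head_cons, Matrix.cons_val_succ, add_zero]
    linarith
  · have E01 := Laux (J 0 1 + J 1 0) (J 0 1) (J 1 0) (J 2 3) (J 3 2) rfl h1 (h0 0 1) (h0 1 0)
    have E10 := Laux (J 0 1 + J 1 0) (J 1 0) (J 0 1) (J 2 3) (J 3 2) (by ring) h1 (h0 1 0) (h0 0 1)
    have E23 := Laux2 (J 0 1 + J 1 0) (J 0 1) (J 1 0) (J 2 3) (J 3 2) rfl h1 (h0 2 3) (h0 3 2)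
    have E32 := Laux2 (J 0 1 + J 1 0) (J 0 1) (J 1 0) (J 3 2) (J 2 3) rfl (by linarith) (h0 3 2) (h0 2 3)
    have E02 := Laux (J 0 2 + J 2 0) (J 0 2) (J 2 0) (J 1 3) (J 3 1) rfl h2 (h0 0 2) (h0 2 0)
    have E20 := Laux (J 0 2 + J 2 0) (J 2 0) (J 0 2) (J 1 3) (J 3 1) (by ring) h2 (h0 2 0) (h0 0 2)
    have E13 := Laux2 (J 0 2 + J 2 0) (J 0 2) (J 2 0) (J 1 3) (J 3 1) rfl h2 (h0 1 3) (h0 3 1)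
    have E31 := Laux2 (J 0 2 + J 2 0) (J 0 2) (J 2 0) (J 3 1) (J 1 3) rfl (by linarith) (h0 3 1) (h0 1 3)
    have E03 := Laux (J 0 3 + J 3 0) (J 0 3) (J 3 0) (J 1 2) (J 2 1) rfl h3 (h0 0 3) (h0 3 0)
    have E30 := Laux (J 0 3 + J 3 0) (J 3 0) (J 0 3) (J 1 2) (J 2 1) (by ring) h3 (h0 3 0) (h0 0 3)
    have E12 := Laux2 (J 0 3 + J 3 0) (J 0 3) (J 3 0) (J 1 2) (J 2 1) rfl h3 (h0 1 2) (h0 2 1)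
    have E21 := Laux2 (J 0 3 + J 3 0) (J 0 3) (J 3 0) (J 2 1) (J 1 2) rfl (by linarith) (h0 2 1) (h0 1 2)
    ext i j
    rw [Matrix.sum_apply]
    simp only [Matrix.smul_apply, smul_eq_mul, jmat_perm]
    simp only [Fin.sum_univ_succ, Fin.sum_univ_zero, Matrix.cons_val_zero,
      Matrix.cons_val_one, Matrix.head_cons, Matrix.cons_val_succ, add_zero,
      pvec, pA1, pA2, pA3, pA4, pB1, pB2, pB3, pB4, pC1, pC2, pC3, pC4,
      Equiv.coe_fn_mk]
    fin_cases i <;> fin_cases j <;>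
      simp (config := { decide := true }) only [if_true, if_false, mul_one, mul_zero,
        add_zero, zero_add, and_true, and_false, true_and, false_and, ite_true, ite_false] <;>
      first
        | exact (hd _).symm
        | exact E01 | exact E10 | exact E23 | exact E32
        | exact E02 | exact E20 | exact E13 | exact E31
        | exact E03 | exact E30 | exact E12 | exact E21

/-- For the spin-spin system, the convex hull of the matrices `J(P)`
over all permutation matrices `P` is exactly the polytope of entrywise nonnegative
matrices with zero diagonal whose symmetrized row sums all equal `1`. -/
theorem spin_spin_perm_polytope :
    convexHull ℝ {J : Matrix (Fin 4) (Fin 4) ℝ | ∃ π : Equiv.Perm (Fin 4),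
        J = Jmat (fun _ : Fin 1 => spinSpinV) (π.permMatrix ℂ)}
      = {J : Matrix (Fin 4) (Fin 4) ℝ | (∀ i j, 0 ≤ J i j) ∧ (∀ i, J i i = 0) ∧
          ∀ i, ∑ j, (J i j + J j i) = 1} := by
  apply Set.Subset.antisymm
  · apply convexHull_min
    · rintro x ⟨π, rfl⟩
      exact vtx_mem_aux π
    · intro x hx y hy a b ha hb hab
      refine ⟨fun i j => ?_, fun i => ?_, fun i => ?_⟩
      · simp only [Matrix.add_apply, Matrix.smul_apply, smul_eq_mul]
        exact add_nonneg (mul_nonneg ha (hx.1 i j)) (mul_nonneg hb (hy.1 i j))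
      · simp [Matrix.add_apply, Matrix.smul_apply, smul_eq_mul, hx.2.1 i, hy.2.1 i]
      · have h1 := hx.2.2 i; have h2 := hy.2.2 i
        simp only [Matrix.add_apply, Matrix.smul_apply, smul_eq_mul]
        calc ∑ j, (a * x i j + b * y i j + (a * x j i + b * y j i))
            = a * ∑ j, (x i j + x j i) + b * ∑ j, (y i j + y j i) := by
              rw [Finset.mul_sum, Finset.mul_sum, ← Finset.sum_add_distrib]
              exact Finset.sum_congr rfl fun j _ => by ring
          _ = 1 := by rw [h1, h2]; linarith
  · rintro J ⟨h0, hd, hs⟩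
    exact spin_spin_superset J h0 hd hs
end
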